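/- arXiv:2604.01068 — 7 statements merged into one kernel-verified Lean document; each statement's English description precedes it below -/
import Mathlib

section
/- Let n ≥ 3 and let G be a simple graph on n vertices with no Hamilton cycle. Then there exists an integer s with 1 ≤ s ≤ ⌊(n−1)/2⌋ such that G contains a set of s vertices each of degree at most s. -/
open SimpleGraph

namespace PosaAux

variable {n : ℕ}

/-- A Hamilton cycle of `G`, as a list with cyclic index adjacency. -/
def CycList (G : SimpleGraph (Fin n)) (l : List (Fin n)) : Prop :=
  l.Nodup ∧ l.length = n ∧ ∀ (i : ℕ) (h : i < l.length),
    G.Adj l[i] (l[(i+1) % l.length]'(Nat.mod_lt _ (Nat.lt_of_le_of_lt (Nat.zero_le i) h)))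

/-- A Hamilton path of `G`, as a list. -/
def PathList (G : SimpleGraph (Fin n)) (l : List (Fin n)) : Prop :=
  l.Nodup ∧ l.length = n ∧ l.Chain' G.Adj

lemma mod_small {a m : ℕ} (h : a < 2*m) (hm : 0 < m) : a % m = a ∨ (m ≤ a ∧ a % m = a - m) := by
  rcases lt_or_ge a m with h' | h'
  · exact Or.inl (Nat.mod_eq_of_lt h')
  · right; refine ⟨h', ?_⟩
    rw [Nat.mod_eq_sub_mod h', Nat.mod_eq_of_lt (by omega)]

lemma mem_of_nodup_length {l : List (Fin n)} (hnd : l.Nodup) (hlen : l.length = n)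
    (v : Fin n) : v ∈ l := by
  have : l.toFinset = Finset.univ := by
    apply Finset.eq_univ_of_card
    rw [List.toFinset_card_of_nodup hnd, hlen, Fintype.card_fin]
  have := this ▸ Finset.mem_univ v
  simpa using this

/-- index cyclic adjacency from chain' + wrap -/
lemma cycIndex_of_chain {G : SimpleGraph (Fin n)} {l : List (Fin n)} (hne : l ≠ [])
    (hc : l.Chain' G.Adj) (hw : G.Adj (l.getLast hne) (l.head hne)) :
    ∀ (i : ℕ) (h : i < l.length),
      G.Adj l[i] (l[(i+1) % l.length]'(Nat.mod_lt _ (Nat.lt_of_le_of_lt (Nat.zero_le i) h))) := by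
  intro i h
  rcases eq_or_lt_of_le (Nat.succ_le_of_lt h) with heq | hlt
  · -- i + 1 = l.length
    have h0 : (i+1) % l.length = 0 := by
      rw [Nat.succ_eq_add_one] at heq; rw [heq, Nat.mod_self]
    have hg : l[i] = l.getLast hne := by
      rw [List.getLast_eq_getElem]; congr 1; omega
    have hh : l[(i+1) % l.length]'(Nat.mod_lt _ (Nat.lt_of_le_of_lt (Nat.zero_le i) h))
        = l.head hne := by
      rw [List.head_eq_getElem]; congr 1
    rw [hg, hh]; exact hw
  · have h1 : (i+1) % l.length = i+1 := Nat.mod_eq_of_lt hlt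
    have := List.isChain_iff_getElem.1 hc i (by omega)
    simpa only [h1] using this

lemma chain_of_cycIndex {G : SimpleGraph (Fin n)} {l : List (Fin n)}
    (hadj : ∀ (i : ℕ) (h : i < l.length),
      G.Adj l[i] (l[(i+1) % l.length]'(Nat.mod_lt _ (Nat.lt_of_le_of_lt (Nat.zero_le i) h)))) :
    l.Chain' G.Adj := by
  refine List.isChain_iff_getElem.2 ?_
  intro i h
  have := hadj i (by omega)
  simpa only [Nat.mod_eq_of_lt (by omega : i + 1 < l.length)] using this

/-- Build a walk along a chain' list. -/
def walkOf (G : SimpleGraph (Fin n)) : (l : List (Fin n)) → (hne : l ≠ []) → l.Chain' G.Adj →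
    G.Walk (l.head hne) (l.getLast hne)
  | [a], _, _ => Walk.nil
  | a :: b :: t, _, h =>
    (Walk.cons (List.isChain_cons_cons.1 h).1
      (walkOf G (b :: t) (by simp) (List.isChain_cons_cons.1 h).2)).copy rfl
      (by rw [List.getLast_cons (by simp : (b :: t) ≠ [])])

lemma walkOf_support (G : SimpleGraph (Fin n)) :
    ∀ (l : List (Fin n)) (hne : l ≠ []) (hc : l.Chain' G.Adj),
      (walkOf G l hne hc).support = l
  | [a], _, _ => by simp [walkOf]
  | a :: b :: t, _, h => by
    simp [walkOf]
    exact congrArg (List.cons a) (walkOf_support G (b :: t) (by simp) (List.isChain_cons_cons.1 h).2)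

lemma walkOf_length (G : SimpleGraph (Fin n)) (l : List (Fin n)) (hne : l ≠ [])
    (hc : l.Chain' G.Adj) : (walkOf G l hne hc).length + 1 = l.length := by
  rw [← Walk.length_support, walkOf_support]

/-- A path walk between the endpoints whose closing edge is in its edge set has length 1. -/
lemma length_eq_one_of_closing_edge {G : SimpleGraph (Fin n)} :
    ∀ {x y : Fin n} (p : G.Walk x y), p.support.Nodup → s(y, x) ∈ p.edges → p.length = 1 := by
  intro x y p
  induction p with
  | nil => intro _ he; simp at he
  | @cons u z w hadj q ih =>
    intro hnd he
    simp only [Walk.edges_cons, List.mem_cons] at he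
    simp only [Walk.support_cons, List.nodup_cons] at hnd
    rcases he with he | he
    · rw [Sym2.eq_iff] at he
      rcases he with ⟨h1, h2⟩ | ⟨h1, h2⟩
      · -- w = u and u = z : contradiction with u ∉ q.support
        exfalso; exact hnd.1 (h2 ▸ q.start_mem_support)
      · -- w = z
        subst h1
        have : q.IsPath := Walk.IsPath.mk' hnd.2
        have := Walk.isPath_iff_eq_nil.1 this
        subst this
        simp
    · exfalso
      rw [Sym2.eq_swap] at he
      exact hnd.1 (q.fst_mem_support_of_mem_edges he)

lemma isHamiltonian_of_cycList (hn : 3 ≤ n) {G : SimpleGraph (Fin n)} {l : List (Fin n)}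
    (h : CycList G l) : G.IsHamiltonian := by
  obtain ⟨hnd, hlen, hadj⟩ := h
  have hne : l ≠ [] := by intro h; rw [h] at hlen; simp at hlen; omega
  have hc : l.Chain' G.Adj := chain_of_cycIndex hadj
  have hw : G.Adj (l.getLast hne) (l.head hne) := by
    have := hadj (l.length - 1) (by have := List.length_pos_iff.2 hne; omega)
    have hmod : (l.length - 1 + 1) % l.length = 0 := by
      have : l.length - 1 + 1 = l.length := by have := List.length_pos_iff.2 hne; omega
      rw [this, Nat.mod_self]
    rw [List.getLast_eq_getElem, List.head_eq_getElem]
    simpa only [hmod] using this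
  set p := walkOf G l hne hc with hp
  have hsupp : p.support = l := walkOf_support G l hne hc
  have hpath : p.IsPath := Walk.IsPath.mk' (hsupp.symm ▸ hnd)
  have hedge : s(l.getLast hne, l.head hne) ∉ p.edges := by
    intro hmem
    have h1 := length_eq_one_of_closing_edge p (hsupp.symm ▸ hnd) hmem
    have h2 : p.length + 1 = l.length := walkOf_length G l hne hc
    omega
  have hcyc : (Walk.cons hw p).IsCycle := (Walk.cons_isCycle_iff p hw).2 ⟨hpath, hedge⟩
  intro _
  refine ⟨l.getLast hne, Walk.cons hw p, ?_⟩
  rw [Walk.isHamiltonianCycle_iff_isCycle_and_support_count_tail_eq_one]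
  refine ⟨hcyc, fun a => ?_⟩
  rw [Walk.support_cons, List.tail_cons, hsupp]
  exact List.count_eq_one_of_mem hnd (mem_of_nodup_length hnd hlen a)

lemma cycList_of_isHamiltonian (hn : 3 ≤ n) {G : SimpleGraph (Fin n)}
    (hG : G.IsHamiltonian) : ∃ l, CycList G l := by
  obtain ⟨a, p, hp⟩ := hG (by rw [Fintype.card_fin]; omega)
  obtain ⟨l, hsc⟩ : ∃ l', p.support = a :: l' := ⟨_, p.support_eq_cons⟩
  have hcount : ∀ v, l.count v = 1 := by
    intro v
    have h1 := hp.isHamiltonian_tail v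
    rw [Walk.support_tail_of_not_nil p hp.1.not_nil, hsc, List.tail_cons] at h1
    exact h1
  have hnd : l.Nodup := List.nodup_iff_count_le_one.2 fun v => (hcount v).le
  have hlen : l.length = n := by
    have h1 : p.support.length = p.length + 1 := Walk.length_support p
    have h2 : p.length = n := by rw [hp.length_eq, Fintype.card_fin]
    rw [hsc] at h1; simp at h1; omega
  have hne : l ≠ [] := by intro h; rw [h] at hlen; simp at hlen; omega
  obtain ⟨b, t, rfl⟩ := List.exists_cons_of_ne_nil hne
  have hch := p.isChain_adj_support
  rw [hsc] at hch
  have hc : (b :: t).Chain' G.Adj := hch.tail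
  have hw : G.Adj ((b :: t).getLast hne) ((b :: t).head hne) := by
    have hlast : (b :: t).getLast hne = a := by
      have h2 := p.getLast_support
      simp only [hsc] at h2
      rw [List.getLast_cons hne] at h2
      exact h2
    rw [hlast, List.head_cons]
    exact (List.isChain_cons_cons.1 hch).1
  exact ⟨b :: t, hnd, hlen, cycIndex_of_chain hne hc hw⟩

lemma cycList_rotate {G : SimpleGraph (Fin n)} {l : List (Fin n)} (h : CycList G l) (m : ℕ) :
    CycList G (l.rotate m) := by
  obtain ⟨hnd, hlen, hadj⟩ := h
  refine ⟨List.nodup_rotate.2 hnd, by rw [List.length_rotate]; exact hlen, ?_⟩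
  intro i hi
  rw [List.length_rotate] at hi
  have hlpos : 0 < l.length := Nat.lt_of_le_of_lt (Nat.zero_le i) hi
  have e1 : ((i+1) % (l.rotate m).length + m) % l.length = ((i + m) % l.length + 1) % l.length := by
    rw [List.length_rotate, Nat.mod_add_mod, Nat.mod_add_mod]
    congr 1; omega
  simp only [List.getElem_rotate, e1]
  exact hadj ((i + m) % l.length) (Nat.mod_lt _ hlpos)



lemma degree_mono {G H : SimpleGraph (Fin n)} [DecidableRel G.Adj] [DecidableRel H.Adj]
    (h : G ≤ H) (v : Fin n) : G.degree v ≤ H.degree v := by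
  apply Finset.card_le_card
  intro w hw
  rw [mem_neighborFinset] at hw ⊢
  exact h hw

lemma top_isHamiltonian (hn : 3 ≤ n) : (⊤ : SimpleGraph (Fin n)).IsHamiltonian := by
  apply isHamiltonian_of_cycList hn (l := List.finRange n)
  refine ⟨List.nodup_finRange n, List.length_finRange, ?_⟩
  intro i h
  rw [List.length_finRange] at h
  have h2 : (i+1) % (List.finRange n).length < n := by
    rw [List.length_finRange]; exact Nat.mod_lt _ (by omega)
  rw [top_adj]
  intro hcontra
  have := congrArg Fin.val hcontra
  simp only [List.getElem_finRange, Fin.coe_cast, Fin.val_mk] at this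
  rw [List.length_finRange] at this
  rcases mod_small (a := i+1) (m := n) (by omega) (by omega) with h' | h' <;> omega

lemma exists_maximal (G : SimpleGraph (Fin n)) (hG : ¬G.IsHamiltonian) :
    ∃ H, G ≤ H ∧ ¬H.IsHamiltonian ∧ ∀ K, H ≤ K → ¬K.IsHamiltonian → K = H := by
  classical
  obtain ⟨H, hH, hmax⟩ := Set.Finite.exists_maximalFor id {H | G ≤ H ∧ ¬H.IsHamiltonian}
    (Set.toFinite _) ⟨G, le_refl G, hG⟩
  exact ⟨H, hH.1, hH.2, fun K hHK hK => le_antisymm (hmax (j := K) ⟨hH.1.trans hHK, hK⟩ hHK) hHK⟩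

lemma exists_pathList (hn : 3 ≤ n) {H : SimpleGraph (Fin n)} (hH : ¬H.IsHamiltonian)
    (hmax : ∀ K, H ≤ K → ¬K.IsHamiltonian → K = H) : ∃ l, PathList H l := by
  have hne : ∃ u v, u ≠ v ∧ ¬H.Adj u v := by
    by_contra hcon
    push_neg at hcon
    have : H = ⊤ := by
      ext u v; rw [top_adj]
      exact ⟨fun h => h.ne, fun h => hcon u v h⟩
    exact hH (this ▸ top_isHamiltonian hn)
  obtain ⟨u, v, huv, hnadj⟩ := hne
  have hham : (H ⊔ edge u v).IsHamiltonian := by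
    by_contra hcon
    have heq := hmax _ le_sup_left hcon
    exact hnadj (heq ▸ (le_sup_right (a := H)
      (by rw [edge_adj]; exact ⟨Or.inl ⟨rfl, rfl⟩, huv⟩ : (edge u v).Adj u v)))
  obtain ⟨cy, hcnd, hclen, hcadj⟩ := cycList_of_isHamiltonian hn hham
  by_cases hall : ∀ (i : ℕ) (h : i < cy.length),
      H.Adj (cy[i]'h) (cy[(i+1) % cy.length]'(Nat.mod_lt _ (Nat.lt_of_le_of_lt (Nat.zero_le i) h)))
  · exact absurd (isHamiltonian_of_cycList hn ⟨hcnd, hclen, hall⟩) hH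
  push_neg at hall
  obtain ⟨k, hk, hbad⟩ := hall
  have hbadpair : (cy[k] = u ∧ (cy[(k+1) % cy.length]'(Nat.mod_lt _ (Nat.lt_of_le_of_lt (Nat.zero_le k) hk)) = v)) ∨
      (cy[k] = v ∧ (cy[(k+1) % cy.length]'(Nat.mod_lt _ (Nat.lt_of_le_of_lt (Nat.zero_le k) hk)) = u)) := by
    have h1 := hcadj k hk
    rw [sup_adj, edge_adj] at h1
    rcases h1 with h1 | h1
    · exact absurd h1 hbad
    · tauto
  have hcyc' := cycList_rotate ⟨hcnd, hclen, hcadj⟩ (k+1)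
  obtain ⟨hnd', hlen', hadj'⟩ := hcyc'
  refine ⟨cy.rotate (k+1), hnd', hlen', ?_⟩
  refine List.isChain_iff_getElem.2 ?_
  intro i hi
  rw [List.length_rotate] at hi
  have hNpos : 0 < cy.length := by omega
  have hadji := hadj' i (by rw [List.length_rotate]; omega)
  simp only [List.length_rotate] at hadji
  have hmod1 : (i+1) % cy.length = i + 1 := Nat.mod_eq_of_lt (by omega)
  simp only [hmod1] at hadji
  by_contra hno
  -- the inner pair must be the edge {u,v}
  have hpair : ((cy.rotate (k+1))[i]'(by rw [List.length_rotate]; omega) = u ∧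
        (cy.rotate (k+1))[i+1]'(by rw [List.length_rotate]; omega) = v) ∨
      ((cy.rotate (k+1))[i]'(by rw [List.length_rotate]; omega) = v ∧
        (cy.rotate (k+1))[i+1]'(by rw [List.length_rotate]; omega) = u) := by
    rw [sup_adj, edge_adj] at hadji
    rcases hadji with h1 | h1
    · exact absurd h1 hno
    · tauto
  -- index bookkeeping
  have hgA : (cy.rotate (k+1))[i]'(by rw [List.length_rotate]; omega)
      = cy[(i+(k+1)) % cy.length]'(Nat.mod_lt _ hNpos) := List.getElem_rotate cy (k+1) i _
  have hgB : (cy.rotate (k+1))[i+1]'(by rw [List.length_rotate]; omega)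
      = cy[(i+1+(k+1)) % cy.length]'(Nat.mod_lt _ hNpos) := List.getElem_rotate cy (k+1) (i+1) _
  have hDA := mod_small (a := i+(k+1)) (m := cy.length) (by omega) hNpos
  have hDB := mod_small (a := i+1+(k+1)) (m := cy.length) (by omega) hNpos
  have hDk := mod_small (a := k+1) (m := cy.length) (by omega) hNpos
  have hinj : ∀ (a b : ℕ) (ha : a < cy.length) (hb : b < cy.length), cy[a] = cy[b] → a = b :=
    fun a b ha hb hab => (hcnd.getElem_inj_iff).1 hab
  rw [hgA, hgB] at hpair
  rcases hpair with ⟨hA, hB⟩ | ⟨hA, hB⟩ <;> rcases hbadpair with ⟨hk1, hk2⟩ | ⟨hk1, hk2⟩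
  · have e1 := hinj _ _ (Nat.mod_lt _ hNpos) hk (hA.trans hk1.symm)
    have e2 := hinj _ _ (Nat.mod_lt _ hNpos) (Nat.mod_lt _ hNpos) (hB.trans hk2.symm)
    omega
  · have e1 := hinj _ _ (Nat.mod_lt _ hNpos) (Nat.mod_lt _ hNpos) (hA.trans hk2.symm)
    have e2 := hinj _ _ (Nat.mod_lt _ hNpos) hk (hB.trans hk1.symm)
    omega
  · have e1 := hinj _ _ (Nat.mod_lt _ hNpos) (Nat.mod_lt _ hNpos) (hA.trans hk2.symm)
    have e2 := hinj _ _ (Nat.mod_lt _ hNpos) hk (hB.trans hk1.symm)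
    omega
  · have e1 := hinj _ _ (Nat.mod_lt _ hNpos) hk (hA.trans hk1.symm)
    have e2 := hinj _ _ (Nat.mod_lt _ hNpos) (Nat.mod_lt _ hNpos) (hB.trans hk2.symm)
    omega



/-- The rotated path: `x_i, x_{i-1}, ..., x_0, x_{i+1}, ..., x_{n-1}`. -/
def rot (l : List (Fin n)) (i : ℕ) : List (Fin n) := (l.take (i+1)).reverse ++ l.drop (i+1)

lemma rot_def (l : List (Fin n)) (i : ℕ) :
    rot l i = (l.take (i+1)).reverse ++ l.drop (i+1) := rfl

lemma rot_perm (l : List (Fin n)) (i : ℕ) : (rot l i).Perm l := by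
  have h1 : ((l.take (i+1)).reverse ++ l.drop (i+1)).Perm (l.take (i+1) ++ l.drop (i+1)) :=
    (List.reverse_perm _).append_right _
  rw [rot_def]
  exact h1.trans (by rw [List.take_append_drop])

lemma rot_length (l : List (Fin n)) (i : ℕ) : (rot l i).length = l.length :=
  (rot_perm l i).length_eq

lemma getElem_rot {l : List (Fin n)} {i j : ℕ} (hi : i + 1 ≤ l.length) (hj : j < l.length) :
    (rot l i)[j]'(by rw [rot_length]; exact hj) =
      if h : j ≤ i then l[i-j]'(by omega) else l[j]'hj := by
  have htk : (l.take (i+1)).length = i + 1 := by rw [List.length_take]; omega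
  by_cases h : j ≤ i
  · rw [dif_pos h]
    simp only [rot_def]
    rw [List.getElem_append_left (by rw [List.length_reverse, htk]; omega)]
    rw [List.getElem_reverse]
    have e : (l.take (i+1)).length - 1 - j = i - j := by rw [htk]; omega
    simp only [e]
    rw [List.getElem_take]
  · rw [dif_neg h]
    simp only [rot_def]
    rw [List.getElem_append_right (h₁ := by rw [List.length_reverse, htk]; omega)]
    rw [List.getElem_drop]
    have e : i + 1 + (j - (l.take (i+1)).reverse.length) = j := by
      rw [List.length_reverse, htk]; omega
    simp only [e]

section Key

variable {H : SimpleGraph (Fin n)}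

/-- The rotated list is a Hamilton path, given the chord from `x_0` to `x_{i+1}`. -/
lemma rot_pathList {l : List (Fin n)} (hl : PathList H l) {i : ℕ} (hi : i < n - 1)
    (hadj0 : H.Adj (l[0]'(by rw [hl.2.1]; omega)) (l[i+1]'(by rw [hl.2.1]; omega))) :
    PathList H (rot l i) := by
  obtain ⟨hnd, hlen, hc⟩ := hl
  have hi1 : i + 1 ≤ l.length := by omega
  refine ⟨(rot_perm l i).nodup_iff.2 hnd, by rw [rot_length, hlen], ?_⟩
  refine List.isChain_iff_getElem.2 ?_
  intro j hj
  rw [rot_length] at hj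
  rw [getElem_rot hi1 (by omega), getElem_rot hi1 (by omega)]
  by_cases h1 : j + 1 ≤ i
  · rw [dif_pos (by omega), dif_pos h1]
    have := List.isChain_iff_getElem.1 hc (i - j - 1) (by omega)
    have e : i - j - 1 + 1 = i - j := by omega
    simp only [e] at this
    have e2 : i - (j+1) = i - j - 1 := by omega
    simp only [e2]
    exact this.symm
  · by_cases h2 : j ≤ i
    · -- j = i, junction
      have hji : j = i := by omega
      rw [dif_pos h2, dif_neg (by omega)]
      subst hji
      simpa [Nat.sub_self] using hadj0
    · rw [dif_neg h2, dif_neg (by omega)]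
      have := List.isChain_iff_getElem.1 hc j (by omega)
      simpa only [List.get_eq_getElem] using this

lemma rot_cycList {l : List (Fin n)} (hl : PathList H l) {i : ℕ} (hi : i < n - 1)
    (hadj0 : H.Adj (l[0]'(by rw [hl.2.1]; omega)) (l[i+1]'(by rw [hl.2.1]; omega)))
    (hadjJ : H.Adj (l[n-1]'(by rw [hl.2.1]; omega)) (l[i]'(by rw [hl.2.1]; omega))) :
    CycList H (rot l i) := by
  have hp := rot_pathList hl hi hadj0
  obtain ⟨hnd, hlen, hc⟩ := hp
  have hlen0 := hl.2.1
  have hi1 : i + 1 ≤ l.length := by omega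
  have hne : rot l i ≠ [] := by
    intro h
    rw [h] at hlen; simp at hlen
    omega
  refine ⟨hnd, hlen, cycIndex_of_chain hne hc ?_⟩
  have hlast : (rot l i).getLast hne = l[n-1]'(by omega) := by
    rw [List.getLast_eq_getElem]
    have e : (rot l i).length - 1 = n - 1 := by rw [hlen]
    simp only [e]
    rw [getElem_rot hi1 (by omega), dif_neg (by omega)]
  have hhead : (rot l i).head hne = l[i]'(by omega) := by
    rw [List.head_eq_getElem]
    rw [getElem_rot hi1 (by omega), dif_pos (by omega)]
    simp
  rw [hlast, hhead]
  exact hadjJ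

variable [DecidableRel H.Adj]

lemma card_filter_start {l : List (Fin n)} (hl : PathList H l) (d : Fin n) (hn : 3 ≤ n) :
    ((Finset.range (n-1)).filter (fun i => H.Adj (l.getD 0 d) (l.getD (i+1) d))).card
      = H.degree (l.getD 0 d) := by
  obtain ⟨hnd, hlen, -⟩ := hl
  have g : ∀ (m : ℕ) (hm : m < l.length), l.getD m d = l[m]'hm :=
    fun m hm => List.getD_eq_getElem l d hm
  rw [degree]
  apply Finset.card_bij (fun i _ => l.getD (i+1) d)
  · intro i hi
    simp only [Finset.mem_filter, Finset.mem_range] at hi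
    rw [mem_neighborFinset]
    exact hi.2
  · intro i₁ h₁ i₂ h₂ heq
    simp only [Finset.mem_filter, Finset.mem_range] at h₁ h₂
    rw [g (i₁+1) (by omega), g (i₂+1) (by omega)] at heq
    have := hnd.getElem_inj_iff.1 heq
    omega
  · intro w hw
    rw [mem_neighborFinset] at hw
    obtain ⟨j, hj, hjw⟩ := List.mem_iff_getElem.1 (mem_of_nodup_length hnd hlen w)
    have hj0 : j ≠ 0 := by
      intro h
      subst h
      rw [g 0 (by omega), hjw] at hw
      exact H.irrefl hw
    have e : j - 1 + 1 = j := by omega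
    refine ⟨j - 1, ?_, ?_⟩
    · simp only [Finset.mem_filter, Finset.mem_range]
      refine ⟨by omega, ?_⟩
      rw [e, g j hj, hjw]
      exact hw
    · rw [e, g j hj]
      exact hjw

lemma card_filter_last {l : List (Fin n)} (hl : PathList H l) (d : Fin n) (hn : 3 ≤ n) :
    ((Finset.range (n-1)).filter (fun i => H.Adj (l.getD (n-1) d) (l.getD i d))).card
      = H.degree (l.getD (n-1) d) := by
  obtain ⟨hnd, hlen, -⟩ := hl
  have g : ∀ (m : ℕ) (hm : m < l.length), l.getD m d = l[m]'hm :=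
    fun m hm => List.getD_eq_getElem l d hm
  rw [degree]
  apply Finset.card_bij (fun i _ => l.getD i d)
  · intro i hi
    simp only [Finset.mem_filter, Finset.mem_range] at hi
    rw [mem_neighborFinset]
    exact hi.2
  · intro i₁ h₁ i₂ h₂ heq
    simp only [Finset.mem_filter, Finset.mem_range] at h₁ h₂
    rw [g i₁ (by omega), g i₂ (by omega)] at heq
    have := hnd.getElem_inj_iff.1 heq
    omega
  · intro w hw
    rw [mem_neighborFinset] at hw
    obtain ⟨j, hj, hjw⟩ := List.mem_iff_getElem.1 (mem_of_nodup_length hnd hlen w)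
    have hjn : j ≠ n - 1 := by
      intro h
      subst h
      rw [g (n-1) (by omega), hjw] at hw
      exact H.irrefl hw
    refine ⟨j, ?_, ?_⟩
    · simp only [Finset.mem_filter, Finset.mem_range]
      refine ⟨by omega, ?_⟩
      rw [g j hj, hjw]
      exact hw
    · rw [g j hj]
      exact hjw

lemma key (hn : 3 ≤ n) (hH : ¬H.IsHamiltonian)
    (l : List (Fin n)) (hl : PathList H l) (d : Fin n)
    (hmax : ∀ l', PathList H l' → H.degree (l'.getD 0 d) + H.degree (l'.getD (n-1) d)
      ≤ H.degree (l.getD 0 d) + H.degree (l.getD (n-1) d))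
    (hord : H.degree (l.getD 0 d) ≤ H.degree (l.getD (n-1) d)) :
    ∃ s : ℕ, 1 ≤ s ∧ s ≤ (n - 1) / 2 ∧
      ∃ S : Finset (Fin n), S.card = s ∧ ∀ v ∈ S, H.degree v ≤ s := by
  have hlen := hl.2.1
  have hnd := hl.1
  have g : ∀ (m : ℕ) (hm : m < l.length), l.getD m d = l[m]'hm :=
    fun m hm => List.getD_eq_getElem l d hm
  set I := (Finset.range (n-1)).filter (fun i => H.Adj (l.getD 0 d) (l.getD (i+1) d)) with hI
  set J := (Finset.range (n-1)).filter (fun i => H.Adj (l.getD (n-1) d) (l.getD i d)) with hJ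
  -- disjointness
  have hdisj : Disjoint I J := by
    rw [Finset.disjoint_left]
    intro i hiI hiJ
    simp only [hI, hJ, Finset.mem_filter, Finset.mem_range] at hiI hiJ
    have hadj0 : H.Adj (l[0]'(by omega)) (l[i+1]'(by omega)) := by
      have := hiI.2
      rwa [g 0 (by omega), g (i+1) (by omega)] at this
    have hadjJ : H.Adj (l[n-1]'(by omega)) (l[i]'(by omega)) := by
      have := hiJ.2
      rwa [g (n-1) (by omega), g i (by omega)] at this
    exact hH (isHamiltonian_of_cycList hn (rot_cycList hl hiI.1 hadj0 hadjJ))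
  have hIJcard : I.card + J.card ≤ n - 1 := by
    rw [← Finset.card_union_of_disjoint hdisj]
    calc (I ∪ J).card ≤ (Finset.range (n-1)).card :=
          Finset.card_le_card (Finset.union_subset (Finset.filter_subset _ _)
            (Finset.filter_subset _ _))
      _ = n - 1 := Finset.card_range _
  have hIcard : I.card = H.degree (l.getD 0 d) := card_filter_start ⟨hnd, hlen, hl.2.2⟩ d hn
  have hJcard : J.card = H.degree (l.getD (n-1) d) := card_filter_last ⟨hnd, hlen, hl.2.2⟩ d hn
  set s := H.degree (l.getD 0 d) with hs
  have hs1 : 1 ≤ s := by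
    rw [hs, Nat.succ_le, H.degree_pos_iff_exists_adj]
    refine ⟨l.getD 1 d, ?_⟩
    rw [g 0 (by omega), g 1 (by omega)]
    have := List.isChain_iff_getElem.1 hl.2.2 0 (by omega)
    simpa only [List.get_eq_getElem] using this
  have hs2 : s ≤ (n - 1) / 2 := by
    rw [Nat.le_div_iff_mul_le (by norm_num : 0 < 2)]
    omega
  refine ⟨s, hs1, hs2, I.image (fun i => l.getD i d), ?_, ?_⟩
  · rw [Finset.card_image_of_injOn, hIcard]
    intro i₁ h₁ i₂ h₂ heq
    simp only [hI, Finset.coe_filter, Set.mem_setOf_eq, Finset.mem_range] at h₁ h₂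
    dsimp only at heq
    rw [g i₁ (by omega), g i₂ (by omega)] at heq
    have := hnd.getElem_inj_iff.1 heq
    omega
  · intro v hv
    simp only [Finset.mem_image] at hv
    obtain ⟨i, hiI, hiv⟩ := hv
    have hiI' := hiI
    simp only [hI, Finset.mem_filter, Finset.mem_range] at hiI'
    have hadj0 : H.Adj (l[0]'(by omega)) (l[i+1]'(by omega)) := by
      have := hiI'.2
      rwa [g 0 (by omega), g (i+1) (by omega)] at this
    have hq := rot_pathList hl hiI'.1 hadj0
    have hmq := hmax _ hq
    have hq0 : (rot l i).getD 0 d = l.getD i d := by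
      rw [List.getD_eq_getElem (rot l i) d (show 0 < (rot l i).length by
          rw [rot_length]; omega), g i (by omega)]
      rw [getElem_rot (by omega) (by omega), dif_pos (by omega)]
      simp
    have hqn : (rot l i).getD (n-1) d = l.getD (n-1) d := by
      rw [List.getD_eq_getElem (rot l i) d (show n-1 < (rot l i).length by
          rw [rot_length]; omega), g (n-1) (by omega)]
      rw [getElem_rot (by omega) (by omega), dif_neg (by omega)]
    rw [hq0, hqn] at hmq
    rw [← hiv]
    omega

lemma reverse_pathList {l : List (Fin n)} (hl : PathList H l) (hn : 3 ≤ n) (d : Fin n) :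
    PathList H l.reverse ∧ l.reverse.getD 0 d = l.getD (n-1) d ∧
      l.reverse.getD (n-1) d = l.getD 0 d := by
  obtain ⟨hnd, hlen, hc⟩ := hl
  refine ⟨⟨List.nodup_reverse.2 hnd, by rw [List.length_reverse, hlen], ?_⟩, ?_, ?_⟩
  · refine List.isChain_reverse.2 ?_
    exact hc.imp fun a b h => h.symm
  · rw [List.getD_eq_getElem _ d (by rw [List.length_reverse]; omega),
      List.getD_eq_getElem l d (by omega), List.getElem_reverse]
    congr 1
    omega
  · rw [List.getD_eq_getElem _ d (by rw [List.length_reverse]; omega),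
      List.getD_eq_getElem l d (by omega), List.getElem_reverse]
    congr 1
    omega

end Key

end PosaAux

/-- Pósa's lemma (1962): if `G` is a non-Hamiltonian graph on `n ≥ 3` vertices, then there
is an integer `s` with `1 ≤ s ≤ ⌊(n-1)/2⌋` and a set of `s` vertices each of degree at
most `s`. -/
theorem posa_lemma {n : ℕ} (hn : 3 ≤ n) (G : SimpleGraph (Fin n)) [DecidableRel G.Adj]
    (hG : ¬ G.IsHamiltonian) :
    ∃ s : ℕ, 1 ≤ s ∧ s ≤ (n - 1) / 2 ∧
      ∃ S : Finset (Fin n), S.card = s ∧ ∀ v ∈ S, G.degree v ≤ s := by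
  classical
  obtain ⟨H, hGH, hH, hmaxK⟩ := PosaAux.exists_maximal G hG
  haveI : DecidableRel H.Adj := Classical.decRel _
  set d : Fin n := ⟨0, by omega⟩ with hd
  obtain ⟨l0, hl0⟩ := PosaAux.exists_pathList hn hH hmaxK
  have hPfin : {l : List (Fin n) | PosaAux.PathList H l}.Finite :=
    Set.Finite.subset (List.finite_length_eq (Fin n) n) (fun l hl => hl.2.1)
  obtain ⟨l, hlP, hmax0⟩ := Set.Finite.exists_maximalFor
    (fun l : List (Fin n) => H.degree (l.getD 0 d) + H.degree (l.getD (n-1) d)) _ hPfin ⟨l0, hl0⟩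
  simp only [Set.mem_setOf_eq] at hlP hmax0
  have hmax : ∀ l', PosaAux.PathList H l' →
      H.degree (l'.getD 0 d) + H.degree (l'.getD (n-1) d)
        ≤ H.degree (l.getD 0 d) + H.degree (l.getD (n-1) d) := by
    intro l' hl'
    by_contra hcon
    push_neg at hcon
    have := hmax0 (j := l') hl' hcon.le
    omega
  have main : ∃ s : ℕ, 1 ≤ s ∧ s ≤ (n - 1) / 2 ∧
      ∃ S : Finset (Fin n), S.card = s ∧ ∀ v ∈ S, H.degree v ≤ s := by
    rcases le_or_gt (H.degree (l.getD 0 d)) (H.degree (l.getD (n-1) d)) with hord | hord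
    · exact PosaAux.key hn hH l hlP d hmax hord
    · obtain ⟨hrevP, hrev0, hrevn⟩ := PosaAux.reverse_pathList hlP hn d
      refine PosaAux.key hn hH l.reverse hrevP d ?_ ?_
      · intro l' hl'
        rw [hrev0, hrevn]
        have := hmax l' hl'
        omega
      · rw [hrev0, hrevn]
        omega
  obtain ⟨s, h1, h2, S, hS, hdeg⟩ := main
  exact ⟨s, h1, h2, S, hS, fun v hv => le_trans (PosaAux.degree_mono hGH v) (hdeg v hv)⟩
end

section
/- For integers k, n, s with 1 ≤ k and k+1 ≤ s ≤ ⌊n/2⌋, the graph K_{s−1} ∨ (sK₁ ∪ K_{n−2s+1}) has n vertices, minimum degree s − 1 ≥ k, and contains no Hamilton path. -/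
open SimpleGraph

/-- The graph `K_a ∨ (bK₁ ∪ K_{n-a-b})` on `Fin n`: a dominating clique on the first `a`
vertices, joined to the disjoint union of an independent set of size `b` (the next `b`
vertices) and a clique on the remaining `n - a - b` vertices. -/
def hGraph (n a b : ℕ) : SimpleGraph (Fin n) where
  Adj i j := i ≠ j ∧ ((i : ℕ) < a ∨ (j : ℕ) < a ∨ (a + b ≤ (i : ℕ) ∧ a + b ≤ (j : ℕ)))
  symm := ⟨by rintro i j ⟨hne, h⟩; exact ⟨hne.symm, by tauto⟩⟩
  loopless := ⟨by rintro i ⟨hne, -⟩; exact hne rfl⟩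

instance (n a b : ℕ) : DecidableRel (hGraph n a b).Adj := fun i j =>
  inferInstanceAs
    (Decidable (i ≠ j ∧ ((i : ℕ) < a ∨ (j : ℕ) < a ∨ (a + b ≤ (i : ℕ) ∧ a + b ≤ (j : ℕ)))))

/-- A graph is traceable if it has a Hamiltonian path. -/
def SimpleGraph.IsTraceable {V : Type*} [DecidableEq V] (G : SimpleGraph V) : Prop :=
  ∃ (u v : V) (p : G.Walk u v), p.IsHamiltonian

lemma hGraph_adj {n a b : ℕ} {i j : Fin n} : (hGraph n a b).Adj i j ↔
    i ≠ j ∧ ((i : ℕ) < a ∨ (j : ℕ) < a ∨ (a + b ≤ (i : ℕ) ∧ a + b ≤ (j : ℕ))) := Iff.rfl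

lemma card_fin_filter (n l u : ℕ) (hu : u ≤ n) :
    ((Finset.univ : Finset (Fin n)).filter fun j : Fin n => l ≤ (j : ℕ) ∧ (j : ℕ) < u).card
      = u - l := by
  rw [← Nat.card_Ico l u]
  apply Finset.card_nbij (fun j : Fin n => (j : ℕ))
  · intro j hj; simp at hj ⊢; omega
  · intro i _ j _ h; exact Fin.val_injective h
  · intro m hm
    simp at hm ⊢
    exact ⟨⟨m, by omega⟩, by simpa using hm, rfl⟩

lemma card_pos_filter {n : ℕ} (f : ℕ → Fin n)
    (hinj : ∀ i j, i < n → j < n → f i = f j → i = j)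
    (hsurj : ∀ v : Fin n, ∃ i, i < n ∧ f i = v)
    (l u : ℕ) (hu : u ≤ n) :
    (((Finset.range n).filter fun i => l ≤ (f i : ℕ) ∧ (f i : ℕ) < u)).card = u - l := by
  rw [← Nat.card_Ico l u]
  apply Finset.card_nbij (fun i => ((f i : ℕ)))
  · intro i hi; simp at hi ⊢; omega
  · intro i hi j hj h
    simp at hi hj
    exact hinj i j hi.1 hj.1 (Fin.val_injective h)
  · intro m hm
    simp at hm
    obtain ⟨i, hi, hfi⟩ := hsurj ⟨m, by omega⟩
    have hv : (f i : ℕ) = m := by rw [hfi]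
    refine ⟨i, ?_, hv⟩
    simp; omega

lemma no_ham {n a : ℕ} (ha : 1 ≤ a) (hn : 2*a + 2 ≤ n) (f : ℕ → Fin n)
    (hinj : ∀ i j, i < n → j < n → f i = f j → i = j)
    (hsurj : ∀ v : Fin n, ∃ i, i < n ∧ f i = v)
    (hadj : ∀ i, i + 1 < n → (hGraph n a (a+1)).Adj (f i) (f (i+1))) : False := by
  classical
  set I : Finset ℕ := (Finset.range n).filter (fun i => a ≤ (f i : ℕ) ∧ (f i : ℕ) < 2*a+1)
    with hIdef
  set A : Finset ℕ := (Finset.range n).filter (fun i => 0 ≤ (f i : ℕ) ∧ (f i : ℕ) < 0 + a)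
    with hAdef
  have hIcard : I.card = a + 1 := by
    rw [hIdef, card_pos_filter f hinj hsurj a (2*a+1) (by omega)]; omega
  have hAcard : A.card = a := by
    rw [hAdef, card_pos_filter f hinj hsurj 0 (0+a) (by omega)]; omega
  have hImem : ∀ i, i ∈ I ↔ (i < n ∧ a ≤ (f i : ℕ) ∧ (f i : ℕ) < 2*a+1) := by
    intro i; rw [hIdef]; simp [Finset.mem_filter]
  have hAmem : ∀ i, i ∈ A ↔ (i < n ∧ (f i : ℕ) < a) := by
    intro i; rw [hAdef]; simp only [Finset.mem_filter, Finset.mem_range]; omega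
  -- adjacency facts
  have hadj' : ∀ i, i + 1 < n →
      ((f i : ℕ) < a ∨ (f (i+1) : ℕ) < a ∨
        (a + (a+1) ≤ (f i : ℕ) ∧ a + (a+1) ≤ (f (i+1) : ℕ))) := fun i hi => (hadj i hi).2
  have keyL : ∀ i ∈ I, 0 < i → (i - 1) ∈ A := by
    intro i hi h0
    rw [hImem] at hi
    have h1 : i - 1 + 1 = i := by omega
    have h2 := hadj' (i-1) (by omega)
    rw [h1] at h2
    rw [hAmem]
    omega
  have keyR : ∀ i ∈ I, i < n - 1 → (i + 1) ∈ A := by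
    intro i hi h0
    rw [hImem] at hi
    have h2 := hadj' i (by omega)
    rw [hAmem]
    omega
  set S : Finset (ℕ × Bool) :=
      ((I.filter (fun i => 0 < i)).image fun i => (i-1, true)) ∪
      ((I.filter (fun i => i < n-1)).image fun i => (i+1, false)) with hSdef
  have hScard : S.card = (I.filter (fun i => 0 < i)).card +
      (I.filter (fun i => i < n-1)).card := by
    rw [hSdef, Finset.card_union_of_disjoint, Finset.card_image_of_injOn,
      Finset.card_image_of_injOn]
    · intro x hx y hy hxy
      simp only [Prod.mk.injEq] at hxy
      omega
    · intro x hx y hy hxy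
      simp only [Finset.coe_filter, Set.mem_setOf_eq] at hx hy
      simp only [Prod.mk.injEq] at hxy
      omega
    · rw [Finset.disjoint_left]
      rintro ⟨q, b⟩ hx hy
      simp only [Finset.mem_image, Prod.mk.injEq] at hx hy
      obtain ⟨_, _, _, hb⟩ := hx
      obtain ⟨_, _, _, hb'⟩ := hy
      simp_all
  have hSsub : S ⊆ A ×ˢ ({true, false} : Finset Bool) := by
    rintro ⟨q, b⟩ hx
    rw [hSdef] at hx
    simp only [Finset.mem_union, Finset.mem_image, Finset.mem_filter, Prod.mk.injEq] at hx
    rw [Finset.mem_product]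
    rcases hx with ⟨i, ⟨hiI, h0⟩, hq, hb⟩ | ⟨i, ⟨hiI, h0⟩, hq, hb⟩
    · exact ⟨hq ▸ keyL i hiI h0, by simp⟩
    · exact ⟨hq ▸ keyR i hiI h0, by simp⟩
  have hprod : (A ×ˢ ({true, false} : Finset Bool)).card = 2 * a := by
    rw [Finset.card_product, hAcard]
    simp [Finset.card_insert_of_notMem]
    omega
  have hlow1 : I.card ≤ (I.filter (fun i => 0 < i)).card + 1 := by
    have hsplit := Finset.card_filter_add_card_filter_not
      (s := I) (p := fun i => 0 < i)
    have hsub : I.filter (fun i => ¬ 0 < i) ⊆ {0} := by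
      intro x hx; simp only [Finset.mem_filter] at hx; simp; omega
    have := Finset.card_le_card hsub
    rw [Finset.card_singleton] at this
    omega
  have hlow2 : I.card ≤ (I.filter (fun i => i < n-1)).card + 1 := by
    have hsplit := Finset.card_filter_add_card_filter_not
      (s := I) (p := fun i => i < n-1)
    have hsub : I.filter (fun i => ¬ i < n-1) ⊆ {n-1} := by
      intro x hx
      simp only [Finset.mem_filter] at hx
      have := (hImem x).mp hx.1
      simp; omega
    have := Finset.card_le_card hsub
    rw [Finset.card_singleton] at this
    omega
  by_cases h0 : 0 ∈ I ∧ (n-1) ∈ I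
  · -- refined bound
    obtain ⟨j0, hj0n, hfj0⟩ := hsurj ⟨2*a+1, by omega⟩
    set Cs : Finset ℕ := (Finset.range n).filter (fun i => 2*a+1 ≤ (f i : ℕ)) with hCdef
    have hCne : Cs.Nonempty := ⟨j0, by
      rw [hCdef]; simp only [Finset.mem_filter, Finset.mem_range]
      exact ⟨hj0n, by rw [hfj0]⟩⟩
    set j := Cs.min' hCne with hj
    have hjC : j ∈ Cs := Finset.min'_mem _ _
    have hjmem : j < n ∧ 2*a+1 ≤ (f j : ℕ) := by
      rw [hCdef] at hjC; simpa using hjC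
    have h0I := (hImem 0).mp h0.1
    have hjpos : 0 < j := by
      rcases Nat.eq_zero_or_pos j with h | h
      · rw [h] at hjmem; omega
      · exact h
    have hprev : j - 1 ∉ Cs := by
      intro hmem
      have := Finset.min'_le _ _ hmem
      omega
    have hprevlt : (f (j-1) : ℕ) < 2*a+1 := by
      by_contra hcon
      apply hprev
      rw [hCdef]; simp only [Finset.mem_filter, Finset.mem_range]
      exact ⟨by omega, by omega⟩
    have hprevA : (j - 1) ∈ A := by
      have h1 : j - 1 + 1 = j := by omega
      have h2 := hadj' (j-1) (by omega)
      rw [h1] at h2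
      rw [hAmem]
      omega
    have hnotin : ((j-1 : ℕ), true) ∉ S := by
      rw [hSdef]
      simp only [Finset.mem_union, Finset.mem_image, Finset.mem_filter, Prod.mk.injEq]
      rintro (⟨i, ⟨hiI, hipos⟩, hq, -⟩ | ⟨i, ⟨hiI, hipos⟩, hq, hb⟩)
      · have : i = j := by omega
        rw [this, hImem] at hiI
        omega
      · exact Bool.noConfusion hb
    have hsub2 : S ⊆ (A ×ˢ ({true, false} : Finset Bool)).erase ((j-1 : ℕ), true) := by
      intro x hx
      exact Finset.mem_erase.mpr ⟨by rintro rfl; exact hnotin hx, hSsub hx⟩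
    have hcard2 : S.card ≤ 2*a - 1 := by
      have := Finset.card_le_card hsub2
      rwa [Finset.card_erase_of_mem (by
        rw [Finset.mem_product]; exact ⟨hprevA, by simp⟩), hprod] at this
    omega
  · -- at least one endpoint is not in I : get strictly better lower bound
    have hfull : (I.filter (fun i => 0 < i)).card + (I.filter (fun i => i < n-1)).card
        ≥ 2*a + 1 := by
      rcases not_and_or.mp h0 with h | h
      · have he : I.filter (fun i => 0 < i) = I := by
          apply Finset.filter_eq_self.mpr
          intro x hx
          rcases Nat.eq_zero_or_pos x with rfl | hp
          · exact absurd hx h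
          · exact hp
        rw [he]
        omega
      · have he : I.filter (fun i => i < n-1) = I := by
          apply Finset.filter_eq_self.mpr
          intro x hx
          have hxn := ((hImem x).mp hx).1
          rcases Nat.lt_or_ge x (n-1) with hp | hp
          · exact hp
          · have : x = n - 1 := by omega
            rw [this] at hx
            exact absurd hx h
        rw [he]
        omega
    have := Finset.card_le_card hSsub
    omega


set_option maxHeartbeats 1000000 in
/-- For `1 ≤ k` and `k+1 ≤ s ≤ ⌊n/2⌋`, the graph `K_{s-1} ∨ (sK₁ ∪ K_{n-2s+1})` has `n`
vertices, minimum degree `s - 1 ≥ k`, and no Hamilton path. -/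
theorem hGraph_not_traceable {n k s : ℕ} (hk : 1 ≤ k) (hks : k + 1 ≤ s)
    (hs : s ≤ n / 2) :
    Fintype.card (Fin n) = n ∧ (hGraph n (s - 1) s).minDegree = s - 1 ∧ k ≤ s - 1 ∧
      ¬ (hGraph n (s - 1) s).IsTraceable := by
  have h2s : 2 * s ≤ n := by omega
  have hs2 : 2 ≤ s := by omega
  have hn0 : 0 < n := by omega
  haveI : Nonempty (Fin n) := ⟨⟨0, hn0⟩⟩
  set G : SimpleGraph (Fin n) := hGraph n (s - 1) s with hG
  set Aset : Finset (Fin n) :=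
    Finset.univ.filter (fun j : Fin n => 0 ≤ (j : ℕ) ∧ (j : ℕ) < s - 1) with hAset
  set Iset : Finset (Fin n) :=
    Finset.univ.filter (fun j : Fin n => s - 1 ≤ (j : ℕ) ∧ (j : ℕ) < 2*(s-1)+1) with hIset
  have hAcard : Aset.card = s - 1 := by
    rw [hAset, card_fin_filter n 0 (s-1) (by omega)]; omega
  have hIcard : Iset.card = s := by
    rw [hIset, card_fin_filter n (s-1) (2*(s-1)+1) (by omega)]; omega
  -- the special independent-set vertex
  have hv0lt : s - 1 < n := by omega
  set v0 : Fin n := ⟨s-1, hv0lt⟩ with hv0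
  have hv0val : (v0 : ℕ) = s - 1 := rfl
  have hdegpoint : G.degree v0 = s - 1 := by
    have hnb : G.neighborFinset v0 = Aset := by
      ext w
      rw [SimpleGraph.mem_neighborFinset, hG, hGraph_adj, hAset]
      simp only [Finset.mem_filter, Finset.mem_univ, true_and]
      constructor
      · rintro ⟨hne, h⟩
        have hne' : (w : ℕ) ≠ s - 1 := by
          intro hc
          exact hne (Fin.val_injective (by rw [hc, hv0val])).symm
        exact ⟨Nat.zero_le _, by omega⟩
      · rintro ⟨-, hw⟩
        refine ⟨?_, Or.inr (Or.inl hw)⟩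
        intro hc
        have := congrArg Fin.val hc
        rw [hv0val] at this
        omega
    rw [SimpleGraph.degree, hnb, hAcard]
  have hmin_le : G.minDegree ≤ s - 1 := by
    have h := G.minDegree_le_degree v0
    omega
  have hle_min : s - 1 ≤ G.minDegree := by
    apply SimpleGraph.le_minDegree_of_forall_le_degree
    intro v
    rw [SimpleGraph.degree]
    rcases Nat.lt_or_ge (v : ℕ) (s-1) with hv | hv
    · have hsub : Iset ⊆ G.neighborFinset v := by
        intro j hj
        rw [hIset] at hj
        simp only [Finset.mem_filter, Finset.mem_univ, true_and] at hj
        rw [SimpleGraph.mem_neighborFinset, hG, hGraph_adj]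
        exact ⟨fun hc => by subst hc; omega, Or.inl hv⟩
      have := Finset.card_le_card hsub
      omega
    · have hsub : Aset ⊆ G.neighborFinset v := by
        intro j hj
        rw [hAset] at hj
        simp only [Finset.mem_filter, Finset.mem_univ, true_and] at hj
        rw [SimpleGraph.mem_neighborFinset, hG, hGraph_adj]
        exact ⟨fun hc => by subst hc; omega, Or.inr (Or.inl hj.2)⟩
      have := Finset.card_le_card hsub
      omega
  refine ⟨Fintype.card_fin n, le_antisymm hmin_le hle_min, by omega, ?_⟩
  rintro ⟨u, v, p, hp⟩
  have hlen : p.support.length = n := by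
    rw [SimpleGraph.Walk.length_support, hp.length_eq, Fintype.card_fin]
    omega
  have hnodup : p.support.Nodup := hp.isPath.support_nodup
  set f : ℕ → Fin n := fun i => p.support.getD i ⟨0, hn0⟩ with hf
  have hget : ∀ i (h : i < n), f i = p.support.get ⟨i, by omega⟩ := by
    intro i h
    rw [hf]
    exact List.getD_eq_get p.support _ ⟨i, by omega⟩
  have hinj : ∀ i j, i < n → j < n → f i = f j → i = j := by
    intro i j hi hj hij
    rw [hget i hi, hget j hj] at hij
    have := List.nodup_iff_injective_get.mp hnodup hij
    simpa using congrArg Fin.val this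
  have hsurj : ∀ w : Fin n, ∃ i, i < n ∧ f i = w := by
    intro w
    obtain ⟨⟨i, hi⟩, hw⟩ := List.mem_iff_get.mp (hp.mem_support w)
    exact ⟨i, by omega, by rw [hget i (by omega)]; exact hw⟩
  have hchain := List.isChain_iff_getElem.mp p.isChain_adj_support
  have hadj : ∀ i, i + 1 < n → (hGraph n (s-1) ((s-1)+1)).Adj (f i) (f (i+1)) := by
    intro i hi
    have hss : s - 1 + 1 = s := by omega
    rw [hss]
    rw [hget i (by omega), hget (i+1) hi]
    exact hchain i (by omega)
  exact no_ham (by omega) (by omega) f hinj hsurj hadj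
end

section
/- Let k and n be positive integers with 1 ≤ k ≤ ⌊(n−1)/2⌋, and let G be an n-vertex graph with minimum degree at least k. If the number of edges of G exceeds max{ C(n−k,2) + k², C(n−⌊(n−1)/2⌋, 2) + ⌊(n−1)/2⌋² }, then G contains a Hamilton cycle. -/
open SimpleGraph

namespace ErdosAux
variable {V : Type*} [DecidableEq V] [Fintype V]

def walkOfChain (G : SimpleGraph V) :
    ∀ (a : V) (l : List V), List.Chain G.Adj a l →
      G.Walk a ((a :: l).getLast (List.cons_ne_nil a l))
  | _, [], _ => Walk.nil
  | a, b :: l, h =>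
    (Walk.cons (List.chain_cons.mp h).1 (walkOfChain G b l (List.chain_cons.mp h).2)).copy
      rfl (List.getLast_cons (List.cons_ne_nil b l)).symm

@[simp] lemma support_walkOfChain (G : SimpleGraph V) :
    ∀ (a : V) (l : List V) (h : List.Chain G.Adj a l),
      (walkOfChain G a l h).support = a :: l
  | _, [], _ => rfl
  | a, b :: l, h => by
    rw [walkOfChain, Walk.support_copy, Walk.support_cons]
    exact congrArg _ (support_walkOfChain G b l _)

lemma eq_cons_of_mem_edges {G : SimpleGraph V} {u v b : V} (p : G.Walk u b)
    (hp : p.support.Nodup) (he : s(u, v) ∈ p.edges) :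
    ∃ (h : G.Adj u v) (p' : G.Walk v b), p = Walk.cons h p' := by
  cases p with
  | nil => simp at he
  | cons h' p'' =>
    rw [Walk.edges_cons, List.mem_cons] at he
    rcases he with he | he
    · obtain rfl := Sym2.congr_right.mp he
      exact ⟨h', p'', rfl⟩
    · exfalso
      have : u ∈ p''.support := p''.fst_mem_support_of_mem_edges he
      rw [Walk.support_cons, List.nodup_cons] at hp
      exact hp.1 this

/-- A list of all vertices without duplicates, consecutive ones adjacent, with last adjacent
to first, gives a Hamiltonian graph. -/
lemma isHamiltonian_of_list (G : SimpleGraph V) (l : List V) (hne : l ≠ [])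
    (hchain : l.Chain' G.Adj) (hnodup : l.Nodup) (hall : ∀ x : V, x ∈ l)
    (hlen : 3 ≤ l.length)
    (hclose : G.Adj (l.getLast hne) (l.head hne)) : G.IsHamiltonian := by
  match l, hne with
  | a :: t, _ =>
  have ht : t ≠ [] := by
    intro h; subst h; simp at hlen
  -- chain including the closing edge
  have hchain2 : List.Chain G.Adj a (t ++ [a]) := by
    have : List.Chain' G.Adj ((a :: t) ++ [a]) := by
      show List.IsChain _ _
      rw [List.isChain_append]
      refine ⟨hchain, List.isChain_singleton a, ?_⟩
      intro x hx y hy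
      rw [List.getLast?_eq_getLast (List.cons_ne_nil a t)] at hx
      simp only [List.head?_cons, Option.mem_some_iff] at hx hy
      subst hx; subst hy
      simpa using hclose
    exact this
  match t, ht with
  | b :: t', _ =>
  have hab : G.Adj a b := (List.chain_cons.mp hchain2).1
  have hq : List.Chain G.Adj b (t' ++ [a]) := by
    have := (List.chain_cons.mp hchain2).2
    exact this
  have hend : ((b :: (t' ++ [a])).getLast (List.cons_ne_nil _ _)) = a := by
    have h1 : (b :: (t' ++ [a])).getLast? = some a := by
      rw [show (b :: (t' ++ [a])) = (b :: t') ++ [a] from rfl, List.getLast?_concat]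
    rw [List.getLast?_eq_getLast (List.cons_ne_nil _ _)] at h1
    exact Option.some.inj h1
  let q : G.Walk b a := (walkOfChain G b (t' ++ [a]) hq).copy rfl hend
  have hqsupp : q.support = b :: (t' ++ [a]) := by
    simp [q, Walk.support_copy]
  have hanotin : a ∉ b :: t' := by
    rw [List.nodup_cons] at hnodup; exact hnodup.1
  have hqnodup : q.support.Nodup := by
    rw [hqsupp]
    have h2 : (b :: t').Nodup := (List.nodup_cons.mp hnodup).2
    rw [show b :: (t' ++ [a]) = (b :: t') ++ [a] by simp]
    rw [List.nodup_append]
    refine ⟨h2, List.nodup_singleton a, ?_⟩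
    intro x hx
    simp only [List.mem_singleton]
    intro y hy hxy; subst hy; subst hxy; exact hanotin hx
  have hqpath : q.IsPath := Walk.IsPath.mk' hqnodup
  have hnotmem : s(a, b) ∉ q.edges := by
    intro hmem
    rw [Sym2.eq_swap] at hmem
    obtain ⟨h1, p', hp'⟩ := eq_cons_of_mem_edges q hqnodup hmem
    have hp'path : p'.IsPath := by
      have h2 : (Walk.cons h1 p').IsPath := hp' ▸ hqpath
      exact h2.of_cons
    have hp'nil : p' = Walk.nil := by
      cases p' with
      | nil => rfl
      | cons h2 p2 =>
        rw [Walk.cons_isPath_iff] at hp'path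
        exact absurd p2.end_mem_support hp'path.2
    have hlen2 : (b :: (t' ++ [a])).length = 2 := by rw [← hqsupp, hp', hp'nil]; simp
    have h3 : t'.length + 2 = 2 := by simpa using hlen2
    have h4 : t' = [] := List.length_eq_zero_iff.mp (by omega)
    subst h4
    simp at hlen
  let c : G.Walk a a := Walk.cons hab q
  have hcyc : c.IsCycle := (Walk.cons_isCycle_iff q hab).mpr ⟨hqpath, hnotmem⟩
  have hham : c.IsHamiltonianCycle := by
    rw [Walk.isHamiltonianCycle_iff_isCycle_and_support_count_tail_eq_one]
    refine ⟨hcyc, ?_⟩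
    intro x
    have htail : c.support.tail = b :: (t' ++ [a]) := by
      simp only [c, Walk.support_cons, List.tail_cons]; exact hqsupp
    rw [htail]
    have hmem : x ∈ b :: (t' ++ [a]) := by
      have := hall x
      rcases List.mem_cons.mp this with h | h
      · subst h; simp
      · rcases List.mem_cons.mp h with h | h
        · subst h; simp
        · simp [h]
    have : (b :: (t' ++ [a])).Nodup := by rw [← hqsupp]; exact hqnodup
    exact List.count_eq_one_of_mem this hmem
  intro _
  exact ⟨a, c, hham⟩

/-- In a maximal non-Hamiltonian graph, any two distinct non-adjacent vertices are joined
by a Hamilton path. -/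
lemma exists_hamilton_list {G : SimpleGraph V} (hG : ¬ G.IsHamiltonian)
    (hmax : ∀ H, G < H → H.IsHamiltonian) {u v : V} (hne : u ≠ v) (hnadj : ¬ G.Adj u v)
    (hcard : 3 ≤ Fintype.card V) :
    ∃ l : List V, l.Chain' G.Adj ∧ l.Nodup ∧ (∀ x : V, x ∈ l) ∧
      l.head? = some v ∧ l.getLast? = some u := by
  classical
  set G'' : SimpleGraph V := G ⊔ SimpleGraph.fromEdgeSet {s(u, v)} with hG''
  have hGle : G ≤ G'' := le_sup_left
  have huv'' : G''.Adj u v := Or.inr ⟨rfl, hne⟩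
  have hlt : G < G'' := lt_of_le_of_ne hGle (by
    intro h
    rw [← h] at huv''
    exact hnadj huv'')
  have hH : G''.IsHamiltonian := hmax _ hlt
  obtain ⟨w0, c, hc⟩ := hH (by omega)
  -- every edge of G'' other than s(u,v) is an edge of G
  have hsub : ∀ e ∈ G''.edgeSet, e ≠ s(u, v) → e ∈ G.edgeSet := by
    intro e he hne'
    induction e with
    | _ x y =>
      rcases he with he | ⟨he, hxy⟩
      · exact he
      · exact absurd he hne'
  by_cases hmem : s(u, v) ∈ c.edges
  · -- rotate the cycle to start at u
    have hu : u ∈ c.support := hc.mem_support u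
    set c₁ : G''.Walk u u := c.rotate u hu with hc₁def
    have hc₁cyc : c₁.IsCycle := hc.isCycle.rotate hu
    have hc₁tail : ∀ x : V, c₁.support.tail.count x = 1 := by
      intro x
      rw [(Walk.support_rotate c u hu).perm.count_eq]
      rw [← Walk.support_tail_of_not_nil c hc.isCycle.not_nil]
      exact hc.isHamiltonian_tail x
    have hc₁mem : s(u, v) ∈ c₁.edges := (Walk.rotate_edges c u hu).mem_iff.mpr hmem
    have hc₁allmem : ∀ x : V, x ∈ c₁.support.tail := by
      intro x
      rw [← List.count_pos_iff, hc₁tail x]; omega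
    cases hq : c₁ with
    | nil => exact absurd hq hc₁cyc.ne_nil
    | @cons _ b _ hadj q =>
      rw [hq] at hc₁mem hc₁tail hc₁cyc hc₁allmem
      have hqsupnd : q.support.Nodup := by
        have := hc₁cyc.support_nodup
        simpa using this
      have hqtail : ∀ x : V, x ∈ q.support := by simpa using hc₁allmem
      have hedges : (Walk.cons hadj q).edges = s(u, b) :: q.edges := rfl
      have hedgesnd : (s(u, b) :: q.edges).Nodup := by
        have := hc₁cyc.isTrail.edges_nodup
        rwa [hedges] at this
      rw [hedges, List.mem_cons] at hc₁mem
      rcases hc₁mem with heq | hmem'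
      · -- first edge of the cycle is uv
        obtain rfl := Sym2.congr_right.mp heq
        have hqed : ∀ e ∈ q.edges, e ∈ G.edgeSet := by
          intro e he
          refine hsub e (q.edges_subset_edgeSet he) ?_
          intro h; subst h
          exact (List.nodup_cons.mp hedgesnd).1 he
        refine ⟨(q.transfer G hqed).support, Walk.isChain_adj_support _,
          ?_, ?_, ?_, ?_⟩
        · rwa [Walk.support_transfer]
        · intro x; rw [Walk.support_transfer]; exact hqtail x
        · rw [Walk.support_transfer, Walk.support_eq_cons]; rfl
        · rw [Walk.support_transfer, ← List.head?_reverse, ← Walk.support_reverse,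
            Walk.support_eq_cons]; rfl
      · -- uv is in the interior; use the reverse orientation
        have hvb : v ≠ b := by
          intro h; subst h
          exact (List.nodup_cons.mp hedgesnd).1 hmem'
        have hmemr : s(u, v) ∈ q.reverse.edges := by
          rw [Walk.edges_reverse, List.mem_reverse]; exact hmem'
        have hqrsupnd : q.reverse.support.Nodup := by
          rw [Walk.support_reverse]; exact List.nodup_reverse.mpr hqsupnd
        obtain ⟨h1, p', hp'⟩ := eq_cons_of_mem_edges q.reverse hqrsupnd hmemr
        have hqredges : q.reverse.edges.Nodup := by
          rw [Walk.edges_reverse]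
          exact List.nodup_reverse.mpr (List.nodup_cons.mp hedgesnd).2
        have hnot1 : s(u, v) ∉ p'.edges := by
          intro h
          rw [hp'] at hqredges
          exact (List.nodup_cons.mp (by simpa using hqredges)).1 h
        have hup' : u ∉ p'.support := by
          have := hqrsupnd
          rw [hp'] at this
          exact (List.nodup_cons.mp (by simpa using this)).1
        have hp'nd : p'.support.Nodup := by
          rw [hp'] at hqrsupnd
          exact (List.nodup_cons.mp (by simpa using hqrsupnd)).2
        -- build the hamilton path from v to u
        set w : G''.Walk v u := p'.append (Walk.cons hadj.symm Walk.nil) with hwdef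
        have hwsupp : w.support = p'.support ++ [u] := by
          rw [hwdef, Walk.support_append]; rfl
        have hwedges : w.edges = p'.edges ++ [s(b, u)] := by
          rw [hwdef, Walk.edges_append]; rfl
        have hbu : s(b, u) ≠ s(u, v) := by
          intro h
          rw [Sym2.eq_swap] at h
          exact hvb (Sym2.congr_right.mp h).symm
        have hwed : ∀ e ∈ w.edges, e ∈ G.edgeSet := by
          intro e he
          rw [hwedges, List.mem_append] at he
          rcases he with he | he
          · refine hsub e (p'.edges_subset_edgeSet he) ?_
            intro h; subst h; exact hnot1 he
          · rw [List.mem_singleton] at he; subst he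
            exact hsub _ hadj.symm hbu
        refine ⟨(w.transfer G hwed).support, Walk.isChain_adj_support _, ?_, ?_, ?_, ?_⟩
        · rw [Walk.support_transfer, hwsupp]
          rw [List.nodup_append]
          exact ⟨hp'nd, List.nodup_singleton u, by
            intro x hx; simp only [List.mem_singleton]
            intro y hy hxy; subst hy; subst hxy; exact hup' hx⟩
        · intro x
          rw [Walk.support_transfer, hwsupp]
          have hx := hqtail x
          have : x ∈ q.reverse.support := by rw [Walk.support_reverse]; exact List.mem_reverse.mpr hx
          rw [hp', Walk.support_cons, List.mem_cons] at this
          rcases this with h | h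
          · subst h; simp
          · simp [h]
        · rw [Walk.support_transfer, hwsupp, Walk.support_eq_cons]; rfl
        · rw [Walk.support_transfer, hwsupp, List.getLast?_concat]
  · -- the cycle avoids uv, so G is already hamiltonian: contradiction
    exfalso
    have hced : ∀ e ∈ c.edges, e ∈ G.edgeSet := by
      intro e he
      refine hsub e (c.edges_subset_edgeSet he) ?_
      intro h; subst h; exact hmem he
    refine hG (fun _ => ⟨w0, c.transfer G hced, ?_⟩)
    rw [Walk.isHamiltonianCycle_iff_isCycle_and_support_count_tail_eq_one]
    constructor
    · rw [Walk.isCycle_def]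
      refine ⟨?_, ?_, ?_⟩
      · rw [Walk.isTrail_def, Walk.edges_transfer]
        exact hc.isCycle.isTrail.edges_nodup
      · intro h
        have h3 := hc.isCycle.three_le_length
        have hlen0 : c.length = 0 := by
          have := congrArg (fun w => Walk.length w) h
          simpa [Walk.length_transfer] using this
        omega
      · rw [Walk.support_transfer]
        exact hc.isCycle.support_nodup
    · intro x
      rw [Walk.support_transfer, ← Walk.support_tail_of_not_nil c hc.isCycle.not_nil]
      exact hc.isHamiltonian_tail x

/-- In a maximal non-Hamiltonian graph, nonadjacent vertices have degree sum at most `n-1`. -/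
lemma degree_add_degree_le {G : SimpleGraph V} [DecidableRel G.Adj] (hG : ¬ G.IsHamiltonian)
    (hmax : ∀ H, G < H → H.IsHamiltonian) (hcard : 3 ≤ Fintype.card V)
    {u v : V} (hne : u ≠ v) (hnadj : ¬ G.Adj u v) :
    G.degree u + G.degree v + 1 ≤ Fintype.card V := by
  obtain ⟨l, hchain, hnodup, hall, hhead, hlast⟩ := exists_hamilton_list hG hmax hne hnadj hcard
  set n := Fintype.card V with hn
  have hlne : l ≠ [] := by intro h; rw [h] at hhead; simp at hhead
  have hlen : l.length = n := by
    rw [← List.toFinset_card_of_nodup hnodup]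
    have h1 : l.toFinset = Finset.univ :=
      Finset.eq_univ_iff_forall.mpr (fun x => List.mem_toFinset.mpr (hall x))
    rw [h1, Finset.card_univ]
  have hidxlt : ∀ x : V, l.idxOf x < l.length := fun x => List.idxOf_lt_length_iff.mpr (hall x)
  have hidxltn : ∀ x : V, l.idxOf x < n := fun x => hlen ▸ hidxlt x
  have hgetidx : ∀ x : V, l[l.idxOf x]'(hidxlt x) = x := fun x => List.getElem_idxOf _
  obtain ⟨t, hlvt⟩ : ∃ t, l = v :: t := by
    cases l with
    | nil => simp at hhead
    | cons a t =>
      simp only [List.head?_cons, Option.some.injEq] at hhead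
      exact ⟨t, by rw [hhead]⟩
  have hlpos : 0 < l.length := List.length_pos_iff.mpr hlne
  have hhead0 : l[0]'hlpos = v := by
    subst hlvt; rfl
  have hlastu : l.getLast hlne = u := by
    rw [List.getLast?_eq_getLast hlne] at hlast
    exact Option.some.inj hlast
  have hidxu : l.idxOf u = n - 1 := by
    have h1 : l[l.idxOf u]'(hidxlt u) = l[l.length - 1]'(by omega) := by
      rw [hgetidx u, ← List.getLast_eq_getElem hlne, hlastu]
    have h2 := (hnodup.getElem_inj_iff).mp h1
    omega
  have hidx0 : ∀ x : V, l.idxOf x = 0 → x = v := by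
    intro x h
    have h1 : l[l.idxOf x]? = some x := by
      rw [List.getElem?_eq_getElem (hidxlt x), hgetidx x]
    rw [h, List.getElem?_eq_getElem hlpos, hhead0] at h1
    exact (Option.some.inj h1).symm
  have hidxinj : ∀ x y : V, l.idxOf x = l.idxOf y → x = y :=
    fun x y h => (List.idxOf_inj (hall x)).mp h
  have hidxvne : ∀ x : V, G.Adj v x → l.idxOf x ≠ 0 := by
    intro x hx h
    exact G.irrefl ((hidx0 x h) ▸ hx)
  have hidxvle : ∀ x : V, G.Adj v x → l.idxOf x ≤ n - 2 := by
    intro x hx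
    have h1 := hidxltn x
    have h2 : x ≠ u := by
      intro h; subst h; exact hnadj hx.symm
    have h3 : l.idxOf x ≠ n - 1 := by
      intro h; exact h2 (hidxinj x u (h.trans hidxu.symm))
    omega
  have hidxule : ∀ x : V, G.Adj u x → l.idxOf x ≤ n - 2 := by
    intro x hx
    have h1 := hidxltn x
    have h3 : l.idxOf x ≠ n - 1 := by
      intro h; exact (G.ne_of_adj hx).symm (hidxinj x u (h.trans hidxu.symm))
    omega
  classical
  set S := (G.neighborFinset v).image (fun x => l.idxOf x - 1) with hS
  set T := (G.neighborFinset u).image (fun x => l.idxOf x) with hT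
  have hScard : S.card = G.degree v := by
    rw [hS]
    rw [Finset.card_image_of_injOn]
    · rfl
    · intro x hx y hy h
      rw [Finset.mem_coe, SimpleGraph.mem_neighborFinset] at hx hy
      have h1 := hidxvne x hx
      have h2 := hidxvne y hy
      have h' : l.idxOf x - 1 = l.idxOf y - 1 := h
      exact hidxinj x y (by omega)
  have hTcard : T.card = G.degree u := by
    rw [hT, Finset.card_image_of_injOn (fun x _ y _ h => hidxinj x y h)]
    rfl
  have hSsub : S ⊆ Finset.range (n - 1) := by
    intro i hi
    obtain ⟨x, hx, rfl⟩ := Finset.mem_image.mp hi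
    rw [SimpleGraph.mem_neighborFinset] at hx
    have := hidxvle x hx
    rw [Finset.mem_range]
    omega
  have hTsub : T ⊆ Finset.range (n - 1) := by
    intro i hi
    obtain ⟨x, hx, rfl⟩ := Finset.mem_image.mp hi
    rw [SimpleGraph.mem_neighborFinset] at hx
    have := hidxule x hx
    rw [Finset.mem_range]
    omega
  have hdisj : Disjoint S T := by
    rw [Finset.disjoint_left]
    intro i hiS hiT
    obtain ⟨x, hxmem, hxi⟩ := Finset.mem_image.mp hiS
    obtain ⟨y, hymem, hyi⟩ := Finset.mem_image.mp hiT
    rw [SimpleGraph.mem_neighborFinset] at hxmem hymem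
    have hxi' : l.idxOf x = i + 1 := by
      have := hidxvne x hxmem; omega
    have hi1 : i + 1 < l.length := by rw [← hxi']; exact hidxlt x
    have hIy : l.idxOf y = i := hyi
    -- build a Hamiltonian cycle, contradiction
    set A := l.take (i + 1) with hA
    set B := l.drop (i + 1) with hB
    have hlenA : A.length = i + 1 := by
      rw [hA, List.length_take]; omega
    have hAne : A ≠ [] := by
      intro h; rw [h] at hlenA; simp at hlenA
    have hBne : B ≠ [] := by
      intro h
      have : B.length = 0 := by rw [h]; rfl
      rw [hB, List.length_drop] at this
      omega
    set L := A.reverse ++ B with hL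
    have hperm : L.Perm l := by
      have h1 : (A.reverse ++ B).Perm (A ++ B) := (A.reverse_perm).append_right B
      rw [hA, hB, List.take_append_drop] at h1
      exact h1
    have hLnodup : L.Nodup := hperm.nodup_iff.mpr hnodup
    have hLall : ∀ x : V, x ∈ L := fun x => hperm.mem_iff.mpr (hall x)
    have hLlen : L.length = n := by rw [hperm.length_eq, hlen]
    have hLne : L ≠ [] := by
      intro h
      rw [h] at hLlen
      simp at hLlen; omega
    have hly : l[i]? = some y := by
      rw [← hIy, List.getElem?_eq_getElem (hidxlt y), hgetidx y]
    have hlx : l[i + 1]? = some x := by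
      rw [← hxi', List.getElem?_eq_getElem (hidxlt x), hgetidx x]
    have hA' : A = l.take i ++ [y] := by
      rw [hA, List.take_succ, hly]
      rfl
    have hAlast : A.getLast? = some y := by rw [hA', List.getLast?_concat]
    have hBhead : B.head? = some x := by
      rw [hB, List.head?_drop]
      exact hlx
    have hBlast : B.getLast? = some u := by
      have h1 : A ++ B = l := by rw [hA, hB]; exact List.take_append_drop _ l
      have h2 := List.getLast?_append_of_ne_nil A (l₂ := B) hBne
      rw [h1] at h2
      rw [← h2, List.getLast?_eq_getLast hlne, hlastu]
    have hAhead : A.head? = some v := by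
      rw [hA, hlvt, List.take_succ_cons]
      rfl
    have hLhead : L.head? = some y := by
      have hAr : A.reverse = y :: (l.take i).reverse := by rw [hA']; simp
      rw [hL, hAr]
      rfl
    have hLlast : L.getLast? = some u := by
      rw [hL, List.getLast?_append_of_ne_nil _ (l₂ := B) hBne]
      exact hBlast
    have hchainL : L.Chain' G.Adj := by
      show List.IsChain _ _
      rw [hL, List.isChain_append]
      refine ⟨?_, ?_, ?_⟩
      · rw [List.isChain_reverse, hA]
        exact (List.IsChain.take hchain (i + 1)).imp (fun a b h => h.symm)
      · rw [hB]
        exact List.IsChain.drop hchain (i + 1)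
      · intro z hz w hw
        rw [List.getLast?_reverse, hAhead] at hz
        rw [hBhead] at hw
        simp only [Option.mem_some_iff] at hz hw
        subst hz; subst hw
        exact hxmem
    have hLheadel : L.head hLne = y := by
      rw [List.head?_eq_head hLne] at hLhead
      exact Option.some.inj hLhead
    have hLlastel : L.getLast hLne = u := by
      rw [List.getLast?_eq_getLast hLne] at hLlast
      exact Option.some.inj hLlast
    have hclose : G.Adj (L.getLast hLne) (L.head hLne) := by
      rw [hLlastel, hLheadel]
      exact hymem
    exact hG (isHamiltonian_of_list G L hLne hchainL hLnodup hLall (by omega) hclose)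
  have hcup : (S ∪ T).card = G.degree v + G.degree u := by
    rw [Finset.card_union_of_disjoint hdisj, hScard, hTcard]
  have hle : (S ∪ T).card ≤ n - 1 := by
    have h1 := Finset.card_le_card (Finset.union_subset hSsub hTsub)
    simpa using h1
  omega

/-- Complete graphs on at least 3 vertices are Hamiltonian. -/
lemma complete_hamiltonian (G : SimpleGraph V) (h : ∀ x y : V, x ≠ y → G.Adj x y)
    (hcard : 3 ≤ Fintype.card V) : G.IsHamiltonian := by
  set l := (Finset.univ : Finset V).toList with hl
  have hnodup : l.Nodup := Finset.nodup_toList _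
  have hall : ∀ x : V, x ∈ l := fun x => Finset.mem_toList.mpr (Finset.mem_univ x)
  have hlen : l.length = Fintype.card V := Finset.length_toList _
  have hne : l ≠ [] := by
    intro hh; rw [hh] at hlen; simp at hlen; omega
  have hchain : l.Chain' G.Adj := hnodup.isChain.imp (fun a b hab => h a b hab)
  have hpos : 0 < l.length := List.length_pos_iff.mpr hne
  have hclose : G.Adj (l.getLast hne) (l.head hne) := by
    apply h
    intro heq
    rw [List.getLast_eq_getElem hne, List.head_eq_getElem hne] at heq
    have := hnodup.getElem_inj_iff.mp heq
    omega
  exact isHamiltonian_of_list G l hne hchain hnodup hall (by omega) hclose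

/-- The extremal edge-count function. -/
def fE (n h : ℕ) : ℕ := (n - h).choose 2 + h ^ 2

lemma two_mul_choose_two (m : ℕ) : 2 * m.choose 2 = m * (m - 1) := by
  cases m with
  | zero => rfl
  | succ s =>
    rw [Nat.choose_two_right]
    simp only [Nat.succ_sub_one]
    exact Nat.mul_div_cancel' (by rw [mul_comm]; exact (Nat.even_mul_succ_self s).two_dvd)

lemma fE_step {n : ℕ} (j : ℕ) (hj : j + 1 ≤ n) :
    fE n j + (2 * j + 1) = fE n (j + 1) + (n - j - 1) := by
  have key : (n - j) * (n - j - 1) = (n - j - 1) * (n - j - 1 - 1) + 2 * (n - j - 1) := by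
    obtain ⟨m, hm⟩ : ∃ m, n - j = m + 1 := ⟨n - j - 1, by omega⟩
    rw [hm]
    simp only [Nat.add_sub_cancel]
    cases m with
    | zero => rfl
    | succ m' =>
      have e1 : m' + 1 - 1 = m' := rfl
      rw [e1]; ring
  have h2m := two_mul_choose_two (n - j)
  have h2m' := two_mul_choose_two (n - j - 1)
  have hsq : (j + 1) ^ 2 = j ^ 2 + 2 * j + 1 := by ring
  have hidx : n - (j + 1) = n - j - 1 := by omega
  unfold fE
  rw [hidx, hsq]
  omega

lemma fE_up {n : ℕ} (h : ℕ) (hcond : n - h - 1 ≤ 2 * h + 1) :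
    ∀ d, h + d ≤ (n - 1) / 2 → fE n h ≤ fE n (h + d) := by
  intro d
  induction d with
  | zero => intro _; exact le_refl _
  | succ d ih =>
    intro hd
    have h1 : fE n h ≤ fE n (h + d) := ih (by omega)
    have h2 := fE_step (n := n) (h + d) (by omega)
    have h3 : n - (h + d) - 1 ≤ 2 * (h + d) + 1 := by omega
    have h4 : h + (d + 1) = (h + d) + 1 := by omega
    rw [h4]
    omega

lemma fE_down {n : ℕ} (h : ℕ) (hcond : 2 * h + 2 ≤ n - h - 1) :
    ∀ d, d ≤ h → fE n h ≤ fE n (h - d) := by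
  intro d
  induction d with
  | zero => intro _; exact le_refl _
  | succ d ih =>
    intro hd
    have h1 : fE n h ≤ fE n (h - d) := ih (by omega)
    have h2 := fE_step (n := n) (h - d - 1) (by omega)
    have h3 : h - d = (h - d - 1) + 1 := by omega
    have h4 : 2 * (h - d - 1) + 2 ≤ n - (h - d - 1) - 1 := by omega
    have h5 : h - (d + 1) = h - d - 1 := by omega
    rw [h5]
    rw [h3] at h1
    omega

lemma fE_le_max {n k K h : ℕ} (h1 : k ≤ h) (h2 : h ≤ K) (hK : K ≤ (n - 1) / 2) :
    fE n h ≤ max (fE n k) (fE n K) := by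
  by_cases hc : n - h - 1 ≤ 2 * h + 1
  · have := fE_up h hc (K - h) (by omega)
    rw [show h + (K - h) = K by omega] at this
    exact le_max_of_le_right this
  · have := fE_down (n := n) h (by omega) (h - k) (by omega)
    rw [show h - (h - k) = k by omega] at this
    exact le_max_of_le_left this

/-- The Chvátal-style edge count bound for a maximal non-Hamiltonian graph. -/
lemma edge_count_le {G : SimpleGraph V} [DecidableRel G.Adj] (hG : ¬ G.IsHamiltonian)
    (hmax : ∀ H, G < H → H.IsHamiltonian) (hcard : 3 ≤ Fintype.card V)
    {u v : V} (hne : u ≠ v) (hnadj : ¬ G.Adj u v)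
    (hpair : ∀ x y : V, x ≠ y → ¬ G.Adj x y → G.degree x + G.degree y ≤ G.degree u + G.degree v) :
    G.edgeFinset.card ≤ fE (Fintype.card V) (G.degree u) := by
  classical
  set n := Fintype.card V with hn
  set h := G.degree u with hh
  have hsum := degree_add_degree_le hG hmax hcard hne hnadj
  set W : Finset V := Finset.univ.filter (fun w => w ≠ v ∧ ¬ G.Adj w v) with hW
  have hWc : W = Finset.univ \ insert v (G.neighborFinset v) := by
    ext w
    simp only [hW, Finset.mem_filter, Finset.mem_univ, true_and, Finset.mem_sdiff,
      Finset.mem_insert, SimpleGraph.mem_neighborFinset, not_or]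
    rw [G.adj_comm]
  have hvnotin : v ∉ G.neighborFinset v := by
    simp [SimpleGraph.mem_neighborFinset]
  have hWcard : W.card = n - (G.degree v + 1) := by
    rw [hWc, Finset.card_sdiff_of_subset (Finset.subset_univ _), Finset.card_univ,
      Finset.card_insert_of_notMem hvnotin]
    rfl
  have hWdeg : ∀ w ∈ W, G.degree w ≤ h := by
    intro w hw
    rw [hW, Finset.mem_filter] at hw
    have := hpair w v hw.2.1 hw.2.2
    omega
  have hhW : h ≤ W.card := by omega
  obtain ⟨W', hW'sub, hW'card⟩ := Finset.exists_subset_card_eq hhW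
  have hW'deg : ∀ w ∈ W', G.degree w ≤ h := fun w hw => hWdeg w (hW'sub hw)
  set A := Finset.univ \ W' with hA
  have hAcard : A.card = n - h := by
    rw [hA, Finset.card_sdiff_of_subset (Finset.subset_univ _), Finset.card_univ, hW'card]
  have hdegsplit : ∀ w : V, G.degree w =
      (G.neighborFinset w ∩ W').card + (G.neighborFinset w \ W').card :=
    fun w => (Finset.card_inter_add_card_sdiff _ _).symm
  have houtside : ∀ w ∈ A, (G.neighborFinset w \ W').card ≤ n - h - 1 := by
    intro w hw
    have hsub2 : G.neighborFinset w \ W' ⊆ A.erase w := by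
      intro x hx
      rw [Finset.mem_sdiff] at hx
      rw [Finset.mem_erase]
      refine ⟨?_, ?_⟩
      · intro hxe
        subst hxe
        have hx1 := hx.1
        rw [SimpleGraph.mem_neighborFinset] at hx1
        exact G.irrefl hx1
      · rw [hA, Finset.mem_sdiff]
        exact ⟨Finset.mem_univ _, hx.2⟩
    calc (G.neighborFinset w \ W').card ≤ (A.erase w).card := Finset.card_le_card hsub2
      _ = A.card - 1 := Finset.card_erase_of_mem hw
      _ = n - h - 1 := by rw [hAcard]
  have hcount : ∀ w : V, (G.neighborFinset w ∩ W').card =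
      ∑ x ∈ W', if G.Adj w x then 1 else 0 := by
    intro w
    have he : G.neighborFinset w ∩ W' = W'.filter (fun x => G.Adj w x) := by
      ext x
      simp only [Finset.mem_inter, SimpleGraph.mem_neighborFinset, Finset.mem_filter]
      tauto
    rw [he, Finset.card_filter]
  have hbip : ∑ w ∈ A, (G.neighborFinset w ∩ W').card ≤ h * h := by
    calc ∑ w ∈ A, (G.neighborFinset w ∩ W').card
        = ∑ w ∈ A, ∑ x ∈ W', (if G.Adj w x then 1 else 0) :=
          Finset.sum_congr rfl (fun w _ => hcount w)
      _ = ∑ x ∈ W', ∑ w ∈ A, (if G.Adj w x then 1 else 0) := Finset.sum_comm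
      _ = ∑ x ∈ W', (A.filter (fun w => G.Adj w x)).card := by
          refine Finset.sum_congr rfl (fun x _ => ?_)
          rw [Finset.card_filter]
      _ ≤ ∑ x ∈ W', G.degree x := by
          refine Finset.sum_le_sum (fun x _ => ?_)
          refine Finset.card_le_card (fun w hw => ?_)
          rw [Finset.mem_filter] at hw
          rw [SimpleGraph.mem_neighborFinset]
          exact hw.2.symm
      _ ≤ ∑ _x ∈ W', h := Finset.sum_le_sum hW'deg
      _ = h * h := by rw [Finset.sum_const, hW'card, smul_eq_mul]
  have hsumA : ∑ w ∈ A, G.degree w ≤ h * h + (n - h) * (n - h - 1) := by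
    calc ∑ w ∈ A, G.degree w
        = ∑ w ∈ A, ((G.neighborFinset w ∩ W').card + (G.neighborFinset w \ W').card) :=
          Finset.sum_congr rfl (fun w _ => hdegsplit w)
      _ = (∑ w ∈ A, (G.neighborFinset w ∩ W').card) +
          (∑ w ∈ A, (G.neighborFinset w \ W').card) := Finset.sum_add_distrib
      _ ≤ h * h + ∑ _w ∈ A, (n - h - 1) := add_le_add hbip (Finset.sum_le_sum houtside)
      _ = h * h + (n - h) * (n - h - 1) := by
          rw [Finset.sum_const, hAcard, smul_eq_mul]
  have hsumW' : ∑ w ∈ W', G.degree w ≤ h * h := by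
    calc ∑ w ∈ W', G.degree w ≤ ∑ _w ∈ W', h := Finset.sum_le_sum hW'deg
      _ = h * h := by rw [Finset.sum_const, hW'card, smul_eq_mul]
  have htotal : (∑ w, G.degree w) = (∑ w ∈ A, G.degree w) + ∑ w ∈ W', G.degree w := by
    rw [hA]
    exact (Finset.sum_sdiff (Finset.subset_univ W')).symm
  have hhand := SimpleGraph.sum_degrees_eq_twice_card_edges G
  have h2ch := two_mul_choose_two (n - h)
  have hsq : h * h = h ^ 2 := (sq h).symm
  unfold fE
  omega

end ErdosAux


open ErdosAux in
/-- Erdős's 1962 theorem: if `1 ≤ k ≤ ⌊(n-1)/2⌋` and `G` is an `n`-vertex graph with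
minimum degree at least `k` and more than
`max{C(n-k,2) + k², C(n-⌊(n-1)/2⌋,2) + ⌊(n-1)/2⌋²}` edges, then `G` has a Hamilton
cycle. -/
theorem erdos_1962 {n k : ℕ} (hk : 1 ≤ k) (hkn : k ≤ (n - 1) / 2)
    (G : SimpleGraph (Fin n)) [DecidableRel G.Adj] (hδ : k ≤ G.minDegree)
    (he : G.edgeFinset.card >
      max ((n - k).choose 2 + k ^ 2)
        ((n - (n - 1) / 2).choose 2 + ((n - 1) / 2) ^ 2)) :
    G.IsHamiltonian := by
  by_contra hG0
  have hn3 : 3 ≤ n := by omega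
  have hcardV : Fintype.card (Fin n) = n := Fintype.card_fin n
  obtain ⟨G', hle, hmaxl⟩ :=
    Finite.exists_le_maximal (p := fun H : SimpleGraph (Fin n) => ¬ H.IsHamiltonian) hG0
  have hG' : ¬ G'.IsHamiltonian := hmaxl.1
  have hmax : ∀ H, G' < H → H.IsHamiltonian := by
    intro H hlt
    by_contra hH
    exact hlt.not_ge (hmaxl.2 hH hlt.le)
  haveI : DecidableRel G'.Adj := Classical.decRel _
  have hcard3 : 3 ≤ Fintype.card (Fin n) := by rw [hcardV]; omega
  haveI : Nonempty (Fin n) := ⟨⟨0, by omega⟩⟩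
  have hdegmono : ∀ w, G.degree w ≤ G'.degree w := by
    intro w
    apply Finset.card_le_card
    intro x hx
    rw [SimpleGraph.mem_neighborFinset] at hx ⊢
    exact hle hx
  have hδ' : ∀ w, k ≤ G'.degree w := by
    intro w
    calc k ≤ G.minDegree := hδ
      _ ≤ G.degree w := G.minDegree_le_degree w
      _ ≤ G'.degree w := hdegmono w
  have hecard : G.edgeFinset.card ≤ G'.edgeFinset.card :=
    Finset.card_le_card (SimpleGraph.edgeFinset_mono hle)
  by_cases hcomp : ∀ x y : Fin n, x ≠ y → G'.Adj x y
  · exact hG' (complete_hamiltonian G' hcomp hcard3)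
  push_neg at hcomp
  obtain ⟨x0, y0, hxy0, hnadj0⟩ := hcomp
  classical
  set P : Finset (Fin n × Fin n) :=
    Finset.univ.filter (fun p => p.1 ≠ p.2 ∧ ¬ G'.Adj p.1 p.2) with hP
  have hPne : P.Nonempty := ⟨(x0, y0), by simp [hP, hxy0, hnadj0]⟩
  obtain ⟨⟨a, b⟩, habP, habmax⟩ :=
    Finset.exists_max_image P (fun p => G'.degree p.1 + G'.degree p.2) hPne
  rw [hP, Finset.mem_filter] at habP
  obtain ⟨-, hab, hnadjab⟩ := habP
  have hpairmax : ∀ x y : Fin n, x ≠ y → ¬ G'.Adj x y →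
      G'.degree x + G'.degree y ≤ G'.degree a + G'.degree b := by
    intro x y h1 h2
    exact habmax (x, y) (by simp [hP, h1, h2])
  have key : ∀ (c d : Fin n), c ≠ d → ¬ G'.Adj c d → G'.degree c ≤ G'.degree d →
      (∀ x y : Fin n, x ≠ y → ¬ G'.Adj x y →
        G'.degree x + G'.degree y ≤ G'.degree c + G'.degree d) → False := by
    intro c d hcd hnadjcd hdle hpm
    have hbound := edge_count_le hG' hmax hcard3 hcd hnadjcd hpm
    set h := G'.degree c with hh
    have hk' : k ≤ h := hδ' c
    have hsum := degree_add_degree_le hG' hmax hcard3 hcd hnadjcd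
    rw [hcardV] at hsum hbound
    have hK : h ≤ (n - 1) / 2 := by omega
    have hmaxf := fE_le_max (n := n) hk' hK (le_refl _)
    have hfin : G.edgeFinset.card ≤ max (fE n k) (fE n ((n - 1) / 2)) :=
      le_trans hecard (le_trans hbound hmaxf)
    have hrfl : max ((n - k).choose 2 + k ^ 2)
        ((n - (n - 1) / 2).choose 2 + ((n - 1) / 2) ^ 2) = max (fE n k) (fE n ((n - 1) / 2)) := rfl
    rw [hrfl] at he
    exact absurd hfin (not_le.mpr he)
  rcases le_total (G'.degree a) (G'.degree b) with hd | hd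
  · exact key a b hab hnadjab hd hpairmax
  · refine key b a hab.symm (fun hadj => hnadjab hadj.symm) hd ?_
    intro x y h1 h2
    have := hpairmax x y h1 h2
    omega
end

section
/- Let G be an n-vertex graph with minimum degree at least k where n > 6k and k ≥ 1. If e(G) > C(n−k,2) + k², then G contains a Hamilton cycle. -/
open SimpleGraph Finset List

set_option linter.unusedSectionVars false
set_option linter.unusedVariables false
set_option maxHeartbeats 1600000

section ErdosHelpers

variable {V : Type*} [Fintype V] [DecidableEq V]

lemma exists_walk_of_chain (G : SimpleGraph V) :
    ∀ (l : List V) (a b : V), List.Chain G.Adj a l → (a :: l).getLast (by simp) = b →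
      ∃ p : G.Walk a b, p.support = a :: l := by
  intro l
  induction l with
  | nil => intro a b _ hb; simp at hb; subst hb; exact ⟨Walk.nil, rfl⟩
  | cons c t ih =>
      intro a b hchain hb
      simp only [List.Chain, List.isChain_cons_cons] at hchain
      obtain ⟨q, hq⟩ := ih c b hchain.2 (by simpa using hb)
      exact ⟨Walk.cons hchain.1 q, by simp [hq]⟩

lemma not_mem_edges_of_nodup {G : SimpleGraph V} {a b : V} (p : G.Walk a b)
    (h2 : 2 ≤ p.length) (hnd : p.support.Nodup) : s(a, b) ∉ p.edges := by
  cases p with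
  | nil => simp at h2
  | @cons _ c _ h q =>
      intro hmem
      simp only [Walk.edges_cons, List.mem_cons] at hmem
      rw [Walk.support_cons, List.nodup_cons] at hnd
      rcases hmem with heq | hmem
      · rw [Sym2.eq_iff] at heq
        rcases heq with ⟨-, hbc⟩ | ⟨hac, -⟩
        swap
        · exact absurd hac h.ne
        · subst hbc
          cases q with
          | nil => simp at h2
          | cons h' r =>
              rw [Walk.support_cons, List.nodup_cons] at hnd
              exact hnd.2.1 (Walk.end_mem_support r)
      · exact hnd.1 (Walk.fst_mem_support_of_mem_edges q hmem)

lemma isHamiltonian_of_list (G : SimpleGraph V) (l : List V) (hne : l ≠ [])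
    (hchain : l.Chain' G.Adj) (hnd : l.Nodup) (hall : ∀ w, w ∈ l)
    (hcyc : G.Adj (l.getLast hne) (l.head hne)) (hlen : 3 ≤ l.length) :
    G.IsHamiltonian := by
  obtain ⟨a, t, rfl⟩ := List.exists_cons_of_ne_nil hne
  obtain ⟨p, hp⟩ := exists_walk_of_chain G t a ((a :: t).getLast (by simp)) hchain rfl
  have hlenp : p.length = t.length := by
    have := congrArg List.length hp
    rw [Walk.length_support] at this
    simpa using this
  have hndp : p.support.Nodup := by rw [hp]; exact hnd
  have hadj : G.Adj a ((a :: t).getLast (by simp)) := hcyc.symm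
  have hnotmem : s(a, ((a :: t).getLast (by simp))) ∉ p.reverse.edges := by
    rw [Walk.edges_reverse, List.mem_reverse]
    exact not_mem_edges_of_nodup p (by simp at hlen; omega) hndp
  have hcycle : (Walk.cons hadj p.reverse).IsCycle := by
    rw [Walk.cons_isCycle_iff]
    refine ⟨(Walk.IsPath.mk' hndp).reverse, hnotmem⟩
  have hham : (Walk.cons hadj p.reverse).IsHamiltonianCycle := by
    rw [Walk.isHamiltonianCycle_iff_isCycle_and_support_count_tail_eq_one]
    refine ⟨hcycle, fun x => ?_⟩
    have : (Walk.cons hadj p.reverse).support.tail = p.reverse.support := by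
      simp [Walk.support_cons]
    rw [this, Walk.support_reverse, hp, List.count_reverse]
    exact List.count_eq_one_of_mem hnd (hall x)
  exact fun _ => ⟨a, _, hham⟩

lemma exists_list_of_isHamiltonian (G : SimpleGraph V) (h : G.IsHamiltonian)
    (hcard : 3 ≤ Fintype.card V) :
    ∃ (l : List V) (hne : l ≠ []), l.Chain' G.Adj ∧ l.Nodup ∧ (∀ w, w ∈ l) ∧
      G.Adj (l.getLast hne) (l.head hne) ∧ l.length = Fintype.card V := by
  obtain ⟨a, c, hc⟩ := h (by omega)
  have hcount := (Walk.isHamiltonianCycle_iff_isCycle_and_support_count_tail_eq_one.mp hc).2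
  set l := c.support.tail with hl
  clear_value l
  have hlen : l.length = Fintype.card V := by
    have := hc.length_eq
    have h2 := c.length_support
    simp only [hl, List.length_tail]
    omega
  have hne : l ≠ [] := by
    intro h0
    rw [h0] at hlen
    simp at hlen
    omega
  have hnd : l.Nodup := List.nodup_iff_count_le_one.mpr fun x => le_of_eq (hcount x)
  have hall : ∀ w, w ∈ l := fun w => List.count_pos_iff.mp (by rw [hcount w]; omega)
  have hsupp : c.support = a :: l := by
    rw [hl]; exact (Walk.support_eq_cons c) ▸ rfl
  have hchain' : (a :: l).Chain' G.Adj := hsupp ▸ c.isChain_adj_support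
  refine ⟨l, hne, hchain'.tail, hnd, hall, ?_, hlen⟩
  obtain ⟨x, t, rfl⟩ := List.exists_cons_of_ne_nil hne
  have hlq : c.support.getLast? = some a := by
    rw [List.getLast?_eq_getLast (l := c.support) (by simp)]
    exact congrArg some (Walk.getLast_support c)
  rw [hsupp, List.getLast?_cons_cons, List.getLast?_eq_getLast (by simp)] at hlq
  have hlast : (x :: t).getLast (by simp) = a := Option.some.inj hlq
  rw [show (x :: t).getLast hne = a from hlast]
  have : G.Adj a x := (List.isChain_cons.mp hchain').1 x rfl
  simpa using this


lemma chain'_of_forbid {H : SimpleGraph V} {u v : V} :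
    ∀ (l : List V), l.Chain' (H ⊔ edge u v).Adj →
      (∀ x y, [x, y] <:+: l → s(x, y) ≠ s(u, v)) → l.Chain' H.Adj := by
  intro l
  induction l with
  | nil => intro _ _; exact List.isChain_nil
  | cons a t ih =>
      intro hchain hforbid
      cases t with
      | nil => exact List.IsChain.singleton a
      | cons b t' =>
          simp only [List.Chain', List.isChain_cons_cons] at hchain ⊢
          refine ⟨?_, ih hchain.2 fun x y hxy => hforbid x y (hxy.trans ⟨[a], [], by simp⟩)⟩
          have h1 := hchain.1
          rw [sup_adj] at h1
          rcases h1 with h1 | h1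
          · exact h1
          · exfalso
            rw [edge_adj] at h1
            refine hforbid a b ⟨[], t', by simp⟩ ?_
            rcases h1.1 with ⟨rfl, rfl⟩ | ⟨rfl, rfl⟩
            · rfl
            · exact Sym2.eq_swap

lemma forbid_of_nodup {u v : V} (m : List V) (hnd : m.Nodup) (hlen : 3 ≤ m.length)
    (hne : m ≠ []) (hwrap : s(m.getLast hne, m.head hne) = s(u, v)) :
    ∀ x y, [x, y] <:+: m → s(x, y) ≠ s(u, v) := by
  rintro x y ⟨s₁, s₂, hm⟩ heq
  rw [← hwrap] at heq
  subst hm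
  have hnd2 : (s₁ ++ x :: y :: s₂).Nodup := by simpa using hnd
  have h1 : (x :: y :: s₂).Nodup := hnd2.of_append_right
  have hdisj : s₁.Disjoint (x :: y :: s₂) := List.disjoint_of_nodup_append hnd2
  have hxy : x ≠ y := by simp [List.nodup_cons] at h1; tauto
  have hxs₂ : x ∉ s₂ := by simp [List.nodup_cons] at h1; tauto
  have hys₂ : y ∉ s₂ := by simp [List.nodup_cons] at h1; tauto
  have hxs₁ : x ∉ s₁ := fun h => hdisj h (by simp)
  have hys₁ : y ∉ s₁ := fun h => hdisj h (by simp)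
  have hhead : (s₁ = [] ∧ (s₁ ++ [x, y] ++ s₂).head hne = x) ∨
      (s₁ ++ [x, y] ++ s₂).head hne ∈ s₁ := by
    cases s₁ with
    | nil => exact Or.inl ⟨rfl, by simp⟩
    | cons a s => exact Or.inr (by rw [List.head_append_of_ne_nil (by simp)]; simp [List.head_mem]
        )
  have hlast : (s₂ = [] ∧ (s₁ ++ [x, y] ++ s₂).getLast hne = y) ∨
      (s₁ ++ [x, y] ++ s₂).getLast hne ∈ s₂ := by
    cases s₂ with
    | nil =>
        refine Or.inl ⟨rfl, ?_⟩
        simp only [List.append_nil]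
        rw [List.getLast_append_of_ne_nil _ (by simp)]
        simp
    | cons b s =>
        refine Or.inr ?_
        rw [List.getLast_append_of_ne_nil _ (by simp)]
        exact List.getLast_mem _
  rw [Sym2.eq_iff] at heq
  rcases heq with ⟨hx, hy⟩ | ⟨hx, hy⟩
  · -- x = getLast, y = head
    rcases hlast with ⟨h2, h3⟩ | h3
    · exact hxy (hx.trans h3)
    · exact hxs₂ (hx ▸ h3)
  · -- x = head, y = getLast
    have hs₁ : s₁ = [] := by
      rcases hhead with ⟨h2, -⟩ | h3
      · exact h2
      · exact absurd (hx ▸ h3) hxs₁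
    have hs₂ : s₂ = [] := by
      rcases hlast with ⟨h2, -⟩ | h3
      · exact h2
      · exact absurd (hy ▸ h3) hys₂
    subst hs₁ hs₂
    simp at hlen


lemma exists_hamPath_list (H : SimpleGraph V) (hnH : ¬H.IsHamiltonian) {u v : V}
    (hne : u ≠ v) (hnadj : ¬H.Adj u v) (hH' : (H ⊔ edge u v).IsHamiltonian)
    (hcard : 3 ≤ Fintype.card V) :
    ∃ (l : List V) (hl : l ≠ []), l.Chain' H.Adj ∧ l.Nodup ∧ (∀ w, w ∈ l) ∧
      ((l.head hl = u ∧ l.getLast hl = v) ∨ (l.head hl = v ∧ l.getLast hl = u)) := by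
  obtain ⟨l, hl, hchain, hnd, hall, hadj, hlen⟩ :=
    exists_list_of_isHamiltonian (H ⊔ edge u v) hH' hcard
  -- Step 1: get a rotated list m with the u-v edge as the wrap pair
  have step1 : ∃ (m : List V) (hm : m ≠ []), m.Chain' (H ⊔ edge u v).Adj ∧ m.Nodup ∧
      (∀ w, w ∈ m) ∧ 3 ≤ m.length ∧ s(m.getLast hm, m.head hm) = s(u, v) := by
    by_cases hw : s(l.getLast hl, l.head hl) = s(u, v)
    · exact ⟨l, hl, hchain, hnd, hall, by omega, hw⟩
    by_cases hint : ∃ x y, [x, y] <:+: l ∧ s(x, y) = s(u, v)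
    · obtain ⟨x, y, ⟨s₁, s₂, hsplit⟩, hxy⟩ := hint
      subst hsplit
      have hlq : (s₁ ++ [x, y] ++ s₂).getLast? = (y :: s₂).getLast? := by
        simp [List.getLast?_append, List.getLast?_eq_getLast (l := y :: s₂) (by simp)]
      have hhq : (s₁ ++ [x, y] ++ s₂).head? = (s₁ ++ [x]).head? := by
        cases s₁ <;> simp
      have hlv : (y :: s₂).getLast? = some ((s₁ ++ [x, y] ++ s₂).getLast hl) := by
        rw [← hlq]; exact List.getLast?_eq_getLast hl
      have hhv : (s₁ ++ [x]).head? = some ((s₁ ++ [x, y] ++ s₂).head hl) := by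
        rw [← hhq]; exact List.head?_eq_head hl
      refine ⟨(y :: s₂) ++ (s₁ ++ [x]), by simp, ?_, ?_, ?_, ?_, ?_⟩
      · simp only [List.Chain']; rw [List.isChain_append]
        have hsplit' : (s₁ ++ [x]) ++ (y :: s₂) = s₁ ++ [x, y] ++ s₂ := by simp
        refine ⟨hchain.suffix ⟨s₁ ++ [x], hsplit'⟩,
          hchain.prefix ⟨y :: s₂, hsplit'⟩, ?_⟩
        intro p hp q hq
        rw [hlv] at hp
        rw [hhv] at hq
        simp only [Option.mem_some_iff] at hp hq
        rw [← hp, ← hq]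
        exact hadj
      · have hperm : ((y :: s₂) ++ (s₁ ++ [x])).Perm (s₁ ++ [x, y] ++ s₂) := by
          calc ((y :: s₂) ++ (s₁ ++ [x])).Perm ((s₁ ++ [x]) ++ (y :: s₂)) :=
                List.perm_append_comm
            _ = (s₁ ++ [x, y] ++ s₂) := by simp
        exact hperm.nodup_iff.mpr hnd
      · intro w
        have hperm : ((y :: s₂) ++ (s₁ ++ [x])).Perm (s₁ ++ [x, y] ++ s₂) := by
          calc ((y :: s₂) ++ (s₁ ++ [x])).Perm ((s₁ ++ [x]) ++ (y :: s₂)) :=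
                List.perm_append_comm
            _ = (s₁ ++ [x, y] ++ s₂) := by simp
        exact (hperm.mem_iff).mpr (hall w)
      · have := hlen
        simp only [List.length_append, List.length_cons] at this ⊢
        simp at this ⊢
        omega
      · have e1 : ((y :: s₂) ++ (s₁ ++ [x])).getLast (by simp) = x := by
          have : ((y :: s₂) ++ (s₁ ++ [x])).getLast? = some x := by
            rw [List.getLast?_append, List.getLast?_append]; simp
          rw [List.getLast?_eq_getLast (by simp)] at this
          exact Option.some.inj this
        have e2 : ((y :: s₂) ++ (s₁ ++ [x])).head (by simp) = y := rfl
        rw [e1, e2]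
        exact hxy
    · exfalso
      apply hnH
      push_neg at hint
      have hchainH : l.Chain' H.Adj := chain'_of_forbid l hchain (fun x y h => hint x y h)
      apply isHamiltonian_of_list H l hl hchainH hnd hall ?_ (by omega)
      have := hadj
      rw [sup_adj] at this
      rcases this with h | h
      · exact h
      · exfalso
        apply hw
        rw [edge_adj] at h
        rcases h.1 with ⟨h1, h2⟩ | ⟨h1, h2⟩
        · rw [h1, h2]
        · rw [h1, h2]; exact Sym2.eq_swap
  -- Step 2
  obtain ⟨m, hm, mchain, mnd, mall, mlen, mwrap⟩ := step1
  have hforbid := forbid_of_nodup m mnd mlen hm mwrap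
  have mchainH : m.Chain' H.Adj := chain'_of_forbid m mchain hforbid
  rw [Sym2.eq_iff] at mwrap
  rcases mwrap with ⟨h1, h2⟩ | ⟨h1, h2⟩
  · exact ⟨m, hm, mchainH, mnd, mall, Or.inr ⟨h2, h1⟩⟩
  · exact ⟨m, hm, mchainH, mnd, mall, Or.inl ⟨h2, h1⟩⟩


lemma crossing (H : SimpleGraph V) [DecidableRel H.Adj] {u v : V} (hnadj : ¬H.Adj u v)
    (l : List V) (hl : l ≠ []) (hchain : l.Chain' H.Adj) (hnd : l.Nodup)
    (hall : ∀ w, w ∈ l) (hhead : l.head hl = u) (hlast : l.getLast hl = v)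
    (hdeg : Fintype.card V ≤ H.degree u + H.degree v) (hcard : 3 ≤ Fintype.card V) :
    H.IsHamiltonian := by
  set n := Fintype.card V with hn
  have hlen : l.length = n := by
    rw [← List.toFinset_card_of_nodup hnd]
    have : l.toFinset = Finset.univ := Finset.eq_univ_iff_forall.mpr (by simp [hall])
    rw [this, Finset.card_univ]
  set f : ℕ → V := fun i => l.getD i u with hf
  have hfeq : ∀ i (h : i < l.length), f i = l[i] := by
    intro i h
    simp [hf, List.getD_eq_getElem?_getD, List.getElem?_eq_getElem h]
  have hinj : ∀ i j, i < l.length → j < l.length → f i = f j → i = j := by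
    intro i j hi hj hij
    rw [hfeq i hi, hfeq j hj] at hij
    exact (hnd.getElem_inj_iff).mp hij
  have hf0 : f 0 = u := by rw [hfeq 0 (by omega), ← List.head_eq_getElem hl, hhead]
  have hflast : f (n - 1) = v := by
    rw [hfeq (n - 1) (by omega), ← hlast, List.getLast_eq_getElem hl]
    congr 1
    omega
  set S : Finset ℕ := (Finset.range (n - 1)).filter (fun i => H.Adj u (f (i + 1))) with hS
  set T : Finset ℕ := (Finset.range (n - 1)).filter (fun i => H.Adj v (f i)) with hT
  have hScard : S.card = H.degree u := by
    rw [← card_neighborFinset_eq_degree]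
    apply Finset.card_bij (fun i _ => f (i + 1))
    · intro i hi
      simp only [hS, Finset.mem_filter, Finset.mem_range] at hi
      simp [mem_neighborFinset, hi.2]
    · intro i hi j hj hij
      simp only [hS, Finset.mem_filter, Finset.mem_range] at hi hj
      have := hinj (i + 1) (j + 1) (by omega) (by omega) hij
      omega
    · intro w hw
      rw [mem_neighborFinset] at hw
      obtain ⟨j, hj, hjw⟩ := List.mem_iff_getElem.mp (hall w)
      have hj0 : j ≠ 0 := by
        intro h0
        subst h0
        rw [← List.head_eq_getElem hl, hhead] at hjw
        exact H.irrefl (hjw ▸ hw)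
      refine ⟨j - 1, ?_, ?_⟩
      · simp only [hS, Finset.mem_filter, Finset.mem_range]
        constructor
        · omega
        · rw [show j - 1 + 1 = j by omega, hfeq j hj, hjw]; exact hw
      · rw [show j - 1 + 1 = j by omega, hfeq j hj, hjw]
  have hTcard : T.card = H.degree v := by
    rw [← card_neighborFinset_eq_degree]
    apply Finset.card_bij (fun i _ => f i)
    · intro i hi
      simp only [hT, Finset.mem_filter, Finset.mem_range] at hi
      simp [mem_neighborFinset, hi.2]
    · intro i hi j hj hij
      simp only [hT, Finset.mem_filter, Finset.mem_range] at hi hj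
      exact hinj i j (by omega) (by omega) hij
    · intro w hw
      rw [mem_neighborFinset] at hw
      obtain ⟨j, hj, hjw⟩ := List.mem_iff_getElem.mp (hall w)
      have hjn : j ≠ n - 1 := by
        intro h0
        subst h0
        rw [← hfeq _ hj, hflast] at hjw
        exact H.irrefl (hjw ▸ hw)
      refine ⟨j, ?_, ?_⟩
      · simp only [hT, Finset.mem_filter, Finset.mem_range]
        refine ⟨by omega, ?_⟩
        rw [hfeq j hj, hjw]; exact hw
      · rw [hfeq j hj, hjw]
  have hint : (S ∩ T).Nonempty := by
    rw [← Finset.card_pos]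
    have h1 : (S ∪ T).card ≤ n - 1 := by
      have : S ∪ T ⊆ Finset.range (n - 1) := by
        apply Finset.union_subset <;> exact Finset.filter_subset _ _
      simpa using Finset.card_le_card this
    have h2 := Finset.card_union_add_card_inter S T
    omega
  obtain ⟨i, hi⟩ := hint
  rw [Finset.mem_inter] at hi
  have hiS := hi.1
  have hiT := hi.2
  simp only [hS, hT, Finset.mem_filter, Finset.mem_range] at hiS hiT
  have hirange : i < n - 1 := hiS.1
  have hadjS : H.Adj u (f (i + 1)) := hiS.2
  have hadjT : H.Adj v (f i) := hiT.2
  -- build the new cycle list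
  set A := l.take (i + 1) with hA
  set B := l.drop (i + 1) with hB
  have hAne : A ≠ [] := by
    simp [hA, ← List.length_pos_iff]
    omega
  have hBne : B ≠ [] := by
    simp [hB, ← List.length_pos_iff]
    omega
  set L := A ++ B.reverse with hL
  have hLne : L ≠ [] := by simp [hL, hAne]
  have hperm : L.Perm l := by
    calc L.Perm (A ++ B) := List.Perm.append_left A B.reverse_perm
      _ = l := List.take_append_drop _ _
  -- endpoint computations
  have hAlast : A.getLast hAne = f i := by
    have h1 : A.getLast? = some (f i) := by
      rw [hA, List.getLast?_take, if_neg (by omega), Nat.add_sub_cancel,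
        List.getElem?_eq_getElem (by omega : i < l.length), Option.some_or,
        ← hfeq i (by omega)]
    rw [List.getLast?_eq_getLast hAne] at h1
    exact Option.some.inj h1
  have hBhead : B.head hBne = f (i + 1) := by
    rw [hfeq (i + 1) (by omega)]
    exact List.head_drop hBne
  have hBlast : B.getLast hBne = v := by
    rw [← hlast]
    exact List.getLast_drop hBne
  have hAhead : A.head hAne = u := by
    have h1 : A.head? = some u := by
      have : A.head? = l.head? := by
        rw [hA]
        cases l with
        | nil => exact absurd rfl hl
        | cons a t => simp [List.take_succ_cons]
      rw [this, List.head?_eq_head hl, hhead]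
    rw [List.head?_eq_head hAne] at h1
    exact Option.some.inj h1
  apply isHamiltonian_of_list H L hLne ?_ (hperm.nodup_iff.mpr hnd)
    (fun w => hperm.mem_iff.mpr (hall w)) ?_ (by have := hperm.length_eq; omega)
  · -- Chain'
    rw [hL]; simp only [List.Chain', List.isChain_append]
    refine ⟨hchain.take _, ?_, ?_⟩
    · rw [List.isChain_reverse]
      exact (hchain.drop _).imp (fun a b h => h.symm)
    · intro p hp q hq
      rw [List.getLast?_eq_getLast hAne, hAlast] at hp
      rw [List.head?_reverse, List.getLast?_eq_getLast hBne, hBlast] at hq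
      simp only [Option.mem_some_iff] at hp hq
      rw [← hp, ← hq]
      exact hadjT.symm
  · -- cyclic adjacency
    have h1 : L.getLast hLne = f (i + 1) := by
      have : L.getLast? = some (f (i + 1)) := by
        rw [hL, List.getLast?_append, List.getLast?_reverse,
          List.head?_eq_head hBne, hBhead]
        rfl
      rw [List.getLast?_eq_getLast hLne] at this
      exact Option.some.inj this
    have h2 : L.head hLne = u := by
      have : L.head? = some u := by
        rw [hL, List.head?_append, List.head?_eq_head hAne, hAhead]
        rfl
      rw [List.head?_eq_head hLne] at this
      exact Option.some.inj this
    rw [h1, h2]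
    exact hadjS.symm


lemma exists_maximal_aux : ∀ (m : ℕ) (G : SimpleGraph V), Gᶜ.edgeSet.ncard ≤ m →
    ¬G.IsHamiltonian → ∃ H, G ≤ H ∧ ¬H.IsHamiltonian ∧
      ∀ u v, u ≠ v → ¬H.Adj u v → (H ⊔ edge u v).IsHamiltonian := by
  intro m
  induction m with
  | zero =>
      intro G hle hnh
      by_cases hmax : ∀ u v, u ≠ v → ¬G.Adj u v → (G ⊔ edge u v).IsHamiltonian
      · exact ⟨G, le_refl G, hnh, hmax⟩
      · exfalso
        push_neg at hmax
        obtain ⟨u, v, huv, hnadj, -⟩ := hmax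
        have : s(u, v) ∈ Gᶜ.edgeSet := by
          rw [mem_edgeSet, compl_adj]
          exact ⟨huv, hnadj⟩
        have hpos : 0 < Gᶜ.edgeSet.ncard :=
          Set.ncard_pos (Set.toFinite _) |>.mpr ⟨_, this⟩
        omega
  | succ m ih =>
      intro G hle hnh
      by_cases hmax : ∀ u v, u ≠ v → ¬G.Adj u v → (G ⊔ edge u v).IsHamiltonian
      · exact ⟨G, le_refl G, hnh, hmax⟩
      · push_neg at hmax
        obtain ⟨u, v, huv, hnadj, hnh'⟩ := hmax
        have hlt : (G ⊔ edge u v)ᶜ.edgeSet.ncard < Gᶜ.edgeSet.ncard := by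
          apply Set.ncard_lt_ncard _ (Set.toFinite _)
          constructor
          · exact edgeSet_mono (compl_le_compl_iff_le.mpr le_sup_left)
          · intro hsub
            have h1 : s(u, v) ∈ Gᶜ.edgeSet := by
              rw [mem_edgeSet, compl_adj]
              exact ⟨huv, hnadj⟩
            have h2 := hsub h1
            rw [mem_edgeSet, compl_adj] at h2
            exact h2.2 (by rw [sup_adj, edge_adj]; exact Or.inr ⟨Or.inl ⟨rfl, rfl⟩, huv⟩)
        obtain ⟨H, h1, h2, h3⟩ := ih (G ⊔ edge u v) (by omega) hnh'
        exact ⟨H, le_trans le_sup_left h1, h2, h3⟩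

lemma exists_maximal (G : SimpleGraph V) (h : ¬G.IsHamiltonian) :
    ∃ H, G ≤ H ∧ ¬H.IsHamiltonian ∧
      ∀ u v, u ≠ v → ¬H.Adj u v → (H ⊔ edge u v).IsHamiltonian :=
  exists_maximal_aux Gᶜ.edgeSet.ncard G le_rfl h

lemma count_bound (H : SimpleGraph V) [DecidableRel H.Adj] (A : Finset V) (j : ℕ)
    (hA : A.card = j) (hdeg : ∀ a ∈ A, H.degree a ≤ j) :
    H.edgeFinset.card ≤ j ^ 2 + (Fintype.card V - j).choose 2 := by
  classical
  set B : Finset V := Finset.univ \ A with hB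
  have hBcard : B.card = Fintype.card V - j := by
    rw [hB, Finset.card_sdiff_of_subset (Finset.subset_univ A), Finset.card_univ, hA]
  set T₁ := H.edgeFinset.filter (fun e => ∃ a ∈ A, a ∈ e) with hT₁
  set T₂ := H.edgeFinset.filter (fun e => ¬∃ a ∈ A, a ∈ e) with hT₂
  have hsplit : T₁.card + T₂.card = H.edgeFinset.card :=
    Finset.card_filter_add_card_filter_not _
  have h1 : T₁.card ≤ j ^ 2 := by
    have hsub : T₁ ⊆ A.biUnion (fun a => H.incidenceFinset a) := by
      intro e he
      rw [hT₁, Finset.mem_filter] at he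
      obtain ⟨a, ha, hae⟩ := he.2
      exact Finset.mem_biUnion.mpr ⟨a, ha, by
        rw [mem_incidenceFinset]
        exact ⟨Set.mem_toFinset.mp (by exact he.1), hae⟩⟩
    calc T₁.card ≤ (A.biUnion (fun a => H.incidenceFinset a)).card :=
          Finset.card_le_card hsub
      _ ≤ ∑ a ∈ A, (H.incidenceFinset a).card := Finset.card_biUnion_le
      _ = ∑ a ∈ A, H.degree a := by
          apply Finset.sum_congr rfl
          intro a _
          exact H.card_incidenceFinset_eq_degree a
      _ ≤ A.card * j := by
          apply Finset.sum_le_card_nsmul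
          exact hdeg
      _ = j ^ 2 := by rw [hA]; ring
  have h2 : T₂.card ≤ (Fintype.card V - j).choose 2 := by
    have hsub : T₂ ⊆ B.sym2.filter (fun e => ¬e.IsDiag) := by
      intro e he
      rw [hT₂, Finset.mem_filter] at he
      push_neg at he
      rw [Finset.mem_filter]
      constructor
      · rw [Finset.mem_sym2_iff]
        intro a hae
        rw [hB, Finset.mem_sdiff]
        exact ⟨Finset.mem_univ a, fun ha => (he.2 a ha) hae⟩
      · exact H.not_isDiag_of_mem_edgeSet (Set.mem_toFinset.mp he.1)
    have hdiag : (B.sym2.filter (fun e => e.IsDiag)).card = B.card := by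
      rw [show B.sym2.filter (fun e => e.IsDiag) = B.image (fun a => s(a, a)) from ?_]
      · rw [Finset.card_image_of_injective _ fun a b hab => by
          simpa using Sym2.eq_iff.mp hab |>.elim (fun h => h.1) (fun h => h.1)]
      · ext e
        induction e with
        | _ x y =>
            simp only [Finset.mem_filter, Finset.mk_mem_sym2_iff, Sym2.mk_isDiag_iff,
              Finset.mem_image, Sym2.eq_iff]
            constructor
            · rintro ⟨⟨hx, hy⟩, rfl⟩
              exact ⟨x, hx, Or.inl ⟨rfl, rfl⟩⟩
            · rintro ⟨a, ha, ⟨rfl, rfl⟩ | ⟨rfl, rfl⟩⟩ <;> exact ⟨⟨ha, ha⟩, rfl⟩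
    have hs2 : B.sym2.card = (B.card + 1).choose 2 := Finset.card_sym2 B
    have hsplit2 : (B.sym2.filter (fun e => e.IsDiag)).card +
        (B.sym2.filter (fun e => ¬e.IsDiag)).card = B.sym2.card :=
      Finset.card_filter_add_card_filter_not _
    have hchoose : (B.card + 1).choose 2 = B.card.choose 2 + B.card := by
      have h := Nat.choose_succ_succ B.card 1
      norm_num [Nat.choose_one_right] at h
      omega
    have hfil : (B.sym2.filter (fun e => ¬e.IsDiag)).card = B.card.choose 2 := by omega
    calc T₂.card ≤ (B.sym2.filter (fun e => ¬e.IsDiag)).card := Finset.card_le_card hsub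
      _ = (Fintype.card V - j).choose 2 := by rw [hfil, hBcard]
  omega

lemma arith_bound (n k j : ℕ) (hkj : k ≤ j) (hj : 2 * j + 1 ≤ n) (hn : 6 * k < n) :
    j ^ 2 + (n - j).choose 2 ≤ k ^ 2 + (n - k).choose 2 := by
  obtain ⟨d, rfl⟩ : ∃ d, j = k + d := ⟨j - k, by omega⟩
  obtain ⟨m', hm'⟩ : ∃ m', n - (k + d) = m' + 1 := ⟨n - (k + d) - 1, by omega⟩
  have hnk : n - k = m' + 1 + d := by omega
  rw [hm', hnk, Nat.choose_two_right, Nat.choose_two_right]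
  have e1 : (m' + 1) * (m' + 1 - 1) = m' * (m' + 1) := by
    rw [Nat.add_sub_cancel]; ring
  have e2 : (m' + 1 + d) * (m' + 1 + d - 1) = (m' + d) * (m' + 1 + d) := by
    have h : m' + 1 + d - 1 = m' + d := by omega
    rw [h]; ring
  rw [e1, e2]
  have hdvd1 : 2 ∣ m' * (m' + 1) := (Nat.even_mul_succ_self m').two_dvd
  have hdvd2 : 2 ∣ (m' + d) * (m' + 1 + d) := by
    have h2 := (Nat.even_mul_succ_self (m' + d)).two_dvd
    have heq : (m' + d) * (m' + d + 1) = (m' + d) * (m' + 1 + d) := by ring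
    rwa [heq] at h2
  obtain ⟨c1, hc1⟩ := hdvd1
  obtain ⟨c2, hc2⟩ := hdvd2
  rw [hc1, hc2, Nat.mul_div_cancel_left _ (by norm_num : 0 < 2),
    Nat.mul_div_cancel_left _ (by norm_num : 0 < 2)]
  have hmul : d * (4 * k + d) ≤ d * (2 * m' + 1) := Nat.mul_le_mul_left d (by omega)
  nlinarith [hc1, hc2, hmul]


lemma getLast_ne_head {α : Type*} {l : List α} (hnd : l.Nodup) (hlen : 2 ≤ l.length)
    (hne : l ≠ []) : l.getLast hne ≠ l.head hne := by
  cases l with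
  | nil => simp at hne
  | cons a t =>
      cases t with
      | nil => simp at hlen
      | cons b t' =>
          have h1 : ((a :: b :: t').getLast (by simp)) = (b :: t').getLast (by simp) :=
            List.getLast_cons (by simp)
          rw [show (a :: b :: t').head hne = a from rfl, h1]
          intro heq
          have h2 : (b :: t').getLast (by simp) ∈ b :: t' := List.getLast_mem _
          rw [heq] at h2
          exact (List.nodup_cons.mp hnd).1 h2


end ErdosHelpers

/-- Simplified Erdős theorem (West's exercise): if `G` is an `n`-vertex graph with
`δ(G) ≥ k ≥ 1`, `n > 6k`, and `e(G) > C(n-k,2) + k²`, then `G` has a Hamilton cycle. -/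
theorem erdos_simplified {n k : ℕ} (hk : 1 ≤ k) (hn : 6 * k < n)
    (G : SimpleGraph (Fin n)) [DecidableRel G.Adj] (hδ : k ≤ G.minDegree)
    (he : G.edgeFinset.card > (n - k).choose 2 + k ^ 2) :
    G.IsHamiltonian := by
  classical
  by_contra hG
  have hcardV : Fintype.card (Fin n) = n := Fintype.card_fin n
  have hcard3 : 3 ≤ Fintype.card (Fin n) := by omega
  obtain ⟨H, hGH, hHnot, hmax⟩ := exists_maximal G hG
  letI : DecidableRel H.Adj := Classical.decRel _
  have hdegk : ∀ x, k ≤ H.degree x := by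
    intro x
    have h1 : G.degree x ≤ H.degree x := by
      apply Finset.card_le_card
      intro w hw
      rw [mem_neighborFinset] at hw ⊢
      exact hGH hw
    exact le_trans (le_trans hδ (G.minDegree_le_degree x)) h1
  have hedge : (n - k).choose 2 + k ^ 2 < H.edgeFinset.card := by
    apply lt_of_lt_of_le he
    apply Finset.card_le_card
    intro e he'
    rw [mem_edgeFinset] at he' ⊢
    exact edgeSet_mono hGH he'
  -- Ore condition on H
  have hOre : ∀ x y, x ≠ y → ¬H.Adj x y → H.degree x + H.degree y ≤ n - 1 := by
    intro x y hxy hnadj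
    by_contra hlt
    push_neg at hlt
    have hsum : Fintype.card (Fin n) ≤ H.degree x + H.degree y := by omega
    obtain ⟨l, hl, lchain, lnd, lall, hends⟩ :=
      exists_hamPath_list H hHnot hxy hnadj (hmax x y hxy hnadj) hcard3
    rcases hends with ⟨hh, hla⟩ | ⟨hh, hla⟩
    · exact hHnot (crossing H hnadj l hl lchain lnd lall hh hla hsum hcard3)
    · exact hHnot (crossing H (fun h => hnadj h.symm) l hl lchain lnd lall hh hla
        (by omega) hcard3)
  -- H is not complete
  have hne_top : ∃ u v : Fin n, u ≠ v ∧ ¬H.Adj u v := by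
    by_contra hc
    push_neg at hc
    apply hHnot
    have hlnd : (Finset.univ : Finset (Fin n)).toList.Nodup := Finset.nodup_toList _
    have hllen : (Finset.univ : Finset (Fin n)).toList.length = n := by
      rw [Finset.length_toList, Finset.card_univ, hcardV]
    have hlne : (Finset.univ : Finset (Fin n)).toList ≠ [] := by
      intro h0; rw [h0] at hllen; simp at hllen; omega
    apply isHamiltonian_of_list H _ hlne ?_ hlnd (fun w => by simp [Finset.mem_toList])
      ?_ (by omega)
    · exact List.IsChain.imp (fun a b hab => hc a b hab) (List.Pairwise.isChain hlnd)
    · exact hc _ _ (getLast_ne_head hlnd (by omega) hlne)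
  -- the key contradiction given an extremal nonadjacent pair
  have key : ∀ u v : Fin n, u ≠ v → ¬H.Adj u v → H.degree u ≤ H.degree v →
      (∀ x y : Fin n, x ≠ y → ¬H.Adj x y →
        H.degree x + H.degree y ≤ H.degree u + H.degree v) → False := by
    intro u v huv hnadj hle hmaxsum
    set j := H.degree u with hj
    have hkj : k ≤ j := hdegk u
    have h2j : 2 * j + 1 ≤ n := by
      have := hOre u v huv hnadj
      omega
    set A₀ : Finset (Fin n) := Finset.univ \ insert v (H.neighborFinset v) with hA₀
    have hA₀card : A₀.card = n - 1 - H.degree v := by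
      rw [hA₀, Finset.card_sdiff_of_subset (Finset.subset_univ _), Finset.card_univ, hcardV,
        Finset.card_insert_of_notMem (by simp [mem_neighborFinset]), 
        card_neighborFinset_eq_degree]
      omega
    have hA₀deg : ∀ w ∈ A₀, H.degree w ≤ j := by
      intro w hw
      rw [hA₀, Finset.mem_sdiff, Finset.mem_insert, mem_neighborFinset] at hw
      push_neg at hw
      have hwv : w ≠ v := hw.2.1
      have hwnadj : ¬H.Adj w v := fun h => hw.2.2 h.symm
      have := hmaxsum w v hwv hwnadj
      omega
    have hA₀big : j ≤ A₀.card := by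
      have := hOre u v huv hnadj
      omega
    obtain ⟨A, hAsub, hAcard⟩ := Finset.exists_subset_card_eq hA₀big
    have hbound := count_bound H A j hAcard (fun a ha => hA₀deg a (hAsub ha))
    rw [hcardV] at hbound
    have harith := arith_bound n k j hkj h2j hn
    omega
  obtain ⟨u₀, v₀, huv₀, hnadj₀⟩ := hne_top
  set P : Finset (Fin n × Fin n) :=
    Finset.univ.filter (fun p => p.1 ≠ p.2 ∧ ¬H.Adj p.1 p.2) with hP
  have hPne : P.Nonempty := ⟨(u₀, v₀), by simp [hP, huv₀, hnadj₀]⟩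
  obtain ⟨p, hpP, hpmax⟩ := Finset.exists_max_image P
    (fun p => H.degree p.1 + H.degree p.2) hPne
  rw [hP, Finset.mem_filter] at hpP
  have hmaxsum : ∀ x y : Fin n, x ≠ y → ¬H.Adj x y →
      H.degree x + H.degree y ≤ H.degree p.1 + H.degree p.2 := by
    intro x y hxy hnadj
    exact hpmax (x, y) (by simp [hP, hxy, hnadj])
  rcases le_total (H.degree p.1) (H.degree p.2) with hle | hle
  · exact key p.1 p.2 hpP.2.1 hpP.2.2 hle hmaxsum
  · exact key p.2 p.1 (Ne.symm hpP.2.1) (fun h => hpP.2.2 h.symm) hle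
      (fun x y hxy hnadj => by have := hmaxsum x y hxy hnadj; omega)
end

section
/- Let G be a simple graph on n vertices and let x, y be two distinct vertices. Then the spectral radius of the Kelmans transformation G[x→y] is at least the spectral radius of G, i.e., ρ(G[x→y]) ≥ ρ(G). -/
set_option linter.unusedSectionVars false

open SimpleGraph

/-- Auxiliary (ordered) adjacency for the Kelmans transformation `G[x → y]`:
the edge `xy` is kept if present; an edge `xz` (`z ∉ {x, y}`) survives at `x` only if
`z` is also a neighbor of `y`; `y` becomes adjacent to the former neighbors of `x`
in addition to its own. -/
def kelmansAux {V : Type*} (G : SimpleGraph V) (x y a b : V) : Prop :=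
  (a = x ∧ b = y ∧ G.Adj x y) ∨
  (a = x ∧ b ≠ x ∧ b ≠ y ∧ G.Adj x b ∧ G.Adj y b) ∨
  (a = y ∧ b ≠ x ∧ b ≠ y ∧ (G.Adj y b ∨ G.Adj x b)) ∨
  (a ≠ x ∧ a ≠ y ∧ b ≠ x ∧ b ≠ y ∧ G.Adj a b)

/-- The Kelmans transformation `G[x → y]`: every edge `xz` with `z ∉ N(y) ∪ {y}` is
replaced by the edge `yz`. -/
def kelmans {V : Type*} (G : SimpleGraph V) (x y : V) : SimpleGraph V where
  Adj a b := kelmansAux G x y a b ∨ kelmansAux G x y b a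
  symm := ⟨by intro a b h; exact h.symm⟩
  loopless := ⟨by
    intro a h
    rcases h with h | h <;>
      rcases h with ⟨rfl, rfl, h⟩ | ⟨rfl, h, _⟩ | ⟨rfl, h, _⟩ | ⟨h, _, _⟩ <;>
      simp_all [G.loopless.irrefl]⟩

/-- The spectral radius of a graph: the largest eigenvalue of its adjacency matrix,
i.e. the supremum of the (real) spectrum of the adjacency matrix. -/
noncomputable def specRad {V : Type*} [Fintype V] [DecidableEq V] (G : SimpleGraph V) : ℝ :=
  letI : DecidableRel G.Adj := Classical.decRel _
  sSup (spectrum ℝ (G.adjMatrix ℝ))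

/-! ### Auxiliary material -/

section Rayleigh

open Matrix LinearMap Module.End

variable {V : Type*} [Fintype V] [DecidableEq V]

noncomputable def rayleighSup (A : Matrix V V ℝ) : ℝ :=
  ⨆ v : { v : EuclideanSpace ℝ V // v ≠ 0 },
    (inner ℝ (Matrix.toEuclideanLin A v) (v : EuclideanSpace ℝ V) : ℝ) / ‖(v : EuclideanSpace ℝ V)‖ ^ 2

theorem bddAbove_rayleigh (A : Matrix V V ℝ) :
    BddAbove (Set.range fun v : { v : EuclideanSpace ℝ V // v ≠ 0 } =>
      (inner ℝ (Matrix.toEuclideanLin A v) (v : EuclideanSpace ℝ V) : ℝ) /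
        ‖(v : EuclideanSpace ℝ V)‖ ^ 2) := by
  set T : EuclideanSpace ℝ V →ₗ[ℝ] EuclideanSpace ℝ V := Matrix.toEuclideanLin A with hT
  refine ⟨‖LinearMap.toContinuousLinearMap T‖, ?_⟩
  rintro r ⟨⟨v, hv⟩, rfl⟩
  have hvn : (0:ℝ) < ‖v‖ := norm_pos_iff.mpr hv
  have hv' : (0:ℝ) < ‖v‖ ^ 2 := by positivity
  rw [div_le_iff₀ hv']
  calc (inner ℝ (T v) v : ℝ) ≤ ‖T v‖ * ‖v‖ := real_inner_le_norm _ _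
    _ ≤ ‖LinearMap.toContinuousLinearMap T‖ * ‖v‖ * ‖v‖ := by
        have h := (LinearMap.toContinuousLinearMap T).le_opNorm v
        rw [LinearMap.coe_toContinuousLinearMap'] at h
        nlinarith [norm_nonneg v, norm_nonneg (T v)]
    _ = ‖LinearMap.toContinuousLinearMap T‖ * ‖v‖ ^ 2 := by ring

theorem rayleigh_le_rayleighSup (A : Matrix V V ℝ) (v : EuclideanSpace ℝ V) (hv : v ≠ 0) :
    (inner ℝ (Matrix.toEuclideanLin A v) v : ℝ) / ‖v‖ ^ 2 ≤ rayleighSup A :=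
  le_ciSup (bddAbove_rayleigh A) ⟨v, hv⟩

theorem isGreatest_rayleighSup [Nonempty V] (A : Matrix V V ℝ) (hA : A.IsHermitian) :
    IsGreatest (spectrum ℝ A) (rayleighSup A) := by
  set T : EuclideanSpace ℝ V →ₗ[ℝ] EuclideanSpace ℝ V := Matrix.toEuclideanLin A with hT
  have hsym : T.IsSymmetric := Matrix.isHermitian_iff_isSymmetric.mp hA
  constructor
  · have h1 := hsym.hasEigenvalue_iSup_of_finiteDimensional
    have h2 := h1.mem_spectrum
    rw [Matrix.spectrum_toEuclideanLin] at h2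
    simpa [rayleighSup] using h2
  · rintro μ hμ
    rw [← Matrix.spectrum_toEuclideanLin] at hμ
    have hev : HasEigenvalue T μ := hasEigenvalue_iff_mem_spectrum.mpr hμ
    obtain ⟨v, hv⟩ := hev.exists_hasEigenvector
    have hv0 : v ≠ 0 := hv.right
    have hTv : T v = μ • v := hv.apply_eq_smul
    have heq : (inner ℝ (T v) v : ℝ) / ‖v‖ ^ 2 = μ := by
      rw [hTv, real_inner_smul_left, real_inner_self_eq_norm_sq]
      have hvn : (0:ℝ) < ‖v‖ := norm_pos_iff.mpr hv0
      field_simp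
    rw [← heq]
    exact rayleigh_le_rayleighSup A v hv0

end Rayleigh

section Comb

open Finset

variable {V : Type*} [DecidableEq V] {G : SimpleGraph V} {x y : V}

lemma kadj_xy (hxy : x ≠ y) : (kelmans G x y).Adj x y ↔ G.Adj x y := by
  simp [kelmans, kelmansAux, hxy, hxy.symm, G.adj_comm x y]

lemma kadj_x (hxy : x ≠ y) {b : V} (hb1 : b ≠ x) (hb2 : b ≠ y) :
    (kelmans G x y).Adj x b ↔ G.Adj x b ∧ G.Adj y b := by
  simp [kelmans, kelmansAux, hxy, hxy.symm, hb1, hb2]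

lemma kadj_y (hxy : x ≠ y) {b : V} (hb1 : b ≠ x) (hb2 : b ≠ y) :
    (kelmans G x y).Adj y b ↔ (G.Adj y b ∨ G.Adj x b) := by
  simp [kelmans, kelmansAux, hxy, hxy.symm, hb1, hb2]

lemma kadj_oo (hxy : x ≠ y) {a b : V} (ha1 : a ≠ x) (ha2 : a ≠ y) (hb1 : b ≠ x) (hb2 : b ≠ y) :
    (kelmans G x y).Adj a b ↔ G.Adj a b := by
  simp [kelmans, kelmansAux, ha1, ha2, hb1, hb2, G.adj_comm b a]

lemma kadj_swap (hxy : x ≠ y) (a b : V) :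
    (kelmans G y x).Adj a b ↔ (kelmans G x y).Adj (Equiv.swap x y a) (Equiv.swap x y b) := by
  by_cases ha1 : a = x <;> by_cases ha2 : a = y <;> by_cases hb1 : b = x <;> by_cases hb2 : b = y <;>
    first
    | (exfalso; exact hxy (by grind))
    | (subst_vars
       simp [kelmans, kelmansAux, Equiv.swap_apply_left, Equiv.swap_apply_right,
         Equiv.swap_apply_of_ne_of_ne, hxy, hxy.symm, *, G.adj_comm] <;> tauto)

open scoped Classical

section Quad
variable [Fintype V]

noncomputable def eadj (G : SimpleGraph V) (i j : V) : ℝ := if G.Adj i j then 1 else 0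

lemma eadj_comm (G : SimpleGraph V) (i j : V) : eadj G i j = eadj G j i := by
  simp [eadj, G.adj_comm i j]

noncomputable def Qf (G : SimpleGraph V) (w : V → ℝ) : ℝ :=
  ∑ i, ∑ j, eadj G i j * w j * w i

lemma eadj_nonneg (G : SimpleGraph V) (i j : V) : 0 ≤ eadj G i j := by
  unfold eadj; split_ifs <;> norm_num

def Pmov (G : SimpleGraph V) (x y s : V) : Prop := s ≠ x ∧ s ≠ y ∧ G.Adj x s ∧ ¬ G.Adj y s

lemma dx (hxy : x ≠ y) (j : V) :
    eadj (kelmans G x y) x j - eadj G x j = if Pmov G x y j then -1 else 0 := by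
  by_cases h1 : j = x
  · subst h1; simp [eadj, Pmov]
  · by_cases h2 : j = y
    · subst h2; simp [eadj, Pmov, kadj_xy hxy]
    · rw [eadj, eadj, if_congr (kadj_x hxy h1 h2) rfl rfl]
      by_cases hx : G.Adj x j <;> by_cases hy : G.Adj y j <;>
        simp [Pmov, h1, h2, hx, hy]

lemma dy (hxy : x ≠ y) (j : V) :
    eadj (kelmans G x y) y j - eadj G y j = if Pmov G x y j then 1 else 0 := by
  by_cases h1 : j = x
  · subst h1
    have hadj : (kelmans G j y).Adj y j ↔ G.Adj y j := by
      rw [(kelmans G j y).adj_comm, kadj_xy hxy, G.adj_comm]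
    simp [eadj, hadj, Pmov]
  · by_cases h2 : j = y
    · subst h2; simp [eadj, Pmov]
    · rw [eadj, eadj, if_congr (kadj_y hxy h1 h2) rfl rfl]
      by_cases hx : G.Adj x j <;> by_cases hy : G.Adj y j <;>
        simp [Pmov, h1, h2, hx, hy]

lemma doo (hxy : x ≠ y) {i j : V} (h1 : i ≠ x) (h2 : i ≠ y) (h3 : j ≠ x) (h4 : j ≠ y) :
    eadj (kelmans G x y) i j - eadj G i j = 0 := by
  rw [eadj, eadj, if_congr (kadj_oo hxy h1 h2 h3 h4) rfl rfl, sub_self]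

lemma key_row (hxy : x ≠ y) (w : V → ℝ) (i : V) :
    ∑ j, (eadj (kelmans G x y) i j - eadj G i j) * w j =
      (if i = x then -(∑ s ∈ Finset.univ.filter (Pmov G x y), w s) else 0) +
      (if i = y then (∑ s ∈ Finset.univ.filter (Pmov G x y), w s) else 0) +
      (if Pmov G x y i then w y - w x else 0) := by
  by_cases h1 : i = x
  · subst h1
    have hpx : ¬ Pmov G i y i := by simp [Pmov]
    rw [if_pos rfl, if_neg hxy, if_neg hpx]
    have hterm : ∀ j, (eadj (kelmans G i y) i j - eadj G i j) * w j
        = if Pmov G i y j then -(w j) else 0 := by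
      intro j; rw [dx hxy]; split_ifs <;> ring
    rw [Finset.sum_congr rfl (fun j _ => hterm j), ← Finset.sum_filter]
    simp
  · by_cases h2 : i = y
    · subst h2
      have hpy : ¬ Pmov G x i i := by simp [Pmov]
      rw [if_neg h1, if_pos rfl, if_neg hpy]
      have hterm : ∀ j, (eadj (kelmans G x i) i j - eadj G i j) * w j
          = if Pmov G x i j then w j else 0 := by
        intro j; rw [dy hxy]; split_ifs <;> ring
      rw [Finset.sum_congr rfl (fun j _ => hterm j), ← Finset.sum_filter]
      simp
    · rw [if_neg h1, if_neg h2]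
      have hterm : ∀ j, (eadj (kelmans G x y) i j - eadj G i j) * w j
          = (if j = x then (if Pmov G x y i then -(w x) else 0) else 0) +
            (if j = y then (if Pmov G x y i then w y else 0) else 0) := by
        intro j
        by_cases hj1 : j = x
        · subst hj1
          rw [eadj_comm (kelmans G j y) i j, eadj_comm G i j, dx hxy i,
            if_pos rfl, if_neg hxy]
          split_ifs <;> ring
        · by_cases hj2 : j = y
          · subst hj2
            rw [eadj_comm (kelmans G x j) i j, eadj_comm G i j, dy hxy i,
              if_neg hj1, if_pos rfl]
            split_ifs <;> ring
          · rw [doo hxy h1 h2 hj1 hj2, if_neg hj1, if_neg hj2]; ring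
      rw [Finset.sum_congr rfl (fun j _ => hterm j), Finset.sum_add_distrib,
        Finset.sum_ite_eq' Finset.univ x, Finset.sum_ite_eq' Finset.univ y]
      simp only [Finset.mem_univ, if_true]
      split_ifs <;> ring

lemma Qf_le_kelmans (hxy : x ≠ y) (w : V → ℝ) (hw : ∀ i, 0 ≤ w i) (hwxy : w x ≤ w y) :
    Qf G w ≤ Qf (kelmans G x y) w := by
  have hdiff : Qf (kelmans G x y) w - Qf G w
      = ∑ i, (∑ j, (eadj (kelmans G x y) i j - eadj G i j) * w j) * w i := by
    rw [Qf, Qf, ← Finset.sum_sub_distrib]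
    refine Finset.sum_congr rfl fun i _ => ?_
    rw [Finset.sum_mul, ← Finset.sum_sub_distrib]
    refine Finset.sum_congr rfl fun j _ => ?_
    ring
  set c : ℝ := ∑ s ∈ Finset.univ.filter (Pmov G x y), w s with hc
  have hc0 : 0 ≤ c := Finset.sum_nonneg fun s _ => hw s
  have hkey : Qf (kelmans G x y) w - Qf G w = 2 * (w y - w x) * c := by
    rw [hdiff, Finset.sum_congr rfl (fun i _ => by rw [key_row hxy w i])]
    have expand : ∀ i : V, ((if i = x then -c else 0) + (if i = y then c else 0) +
        (if Pmov G x y i then w y - w x else 0)) * w i =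
        (if i = x then -c * w i else 0) + (if i = y then c * w i else 0) +
        (if Pmov G x y i then (w y - w x) * w i else 0) := by
      intro i; split_ifs <;> ring
    rw [Finset.sum_congr rfl (fun i _ => expand i), Finset.sum_add_distrib,
      Finset.sum_add_distrib, Finset.sum_ite_eq' Finset.univ x, Finset.sum_ite_eq' Finset.univ y,
      ← Finset.sum_filter, ← Finset.mul_sum, ← hc]
    simp only [Finset.mem_univ, if_true]
    ring
  nlinarith [mul_nonneg (sub_nonneg.mpr hwxy) hc0]

lemma eadj_swap (hxy : x ≠ y) (i j : V) :
    eadj (kelmans G y x) i j = eadj (kelmans G x y) (Equiv.swap x y i) (Equiv.swap x y j) := by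
  unfold eadj; exact if_congr (kadj_swap hxy i j) rfl rfl

lemma Qf_swap (hxy : x ≠ y) (w : V → ℝ) :
    Qf (kelmans G y x) w = Qf (kelmans G x y) (fun i => w (Equiv.swap x y i)) := by
  rw [Qf, Qf]
  rw [← Equiv.sum_comp (Equiv.swap x y)
      (fun i => ∑ j, eadj (kelmans G y x) i j * w j * w i)]
  refine Finset.sum_congr rfl fun i _ => ?_
  rw [← Equiv.sum_comp (Equiv.swap x y)
      (fun j => eadj (kelmans G y x) ((Equiv.swap x y) i) j * w j * w ((Equiv.swap x y) i))]
  refine Finset.sum_congr rfl fun j _ => ?_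
  rw [eadj_swap hxy, Equiv.swap_apply_self, Equiv.swap_apply_self]

lemma Qf_le_abs (G : SimpleGraph V) (w : V → ℝ) :
    Qf G w ≤ Qf G (fun i => |w i|) := by
  refine Finset.sum_le_sum fun i _ => Finset.sum_le_sum fun j _ => ?_
  have h1 : w j * w i ≤ |w j| * |w i| := by
    calc w j * w i ≤ |w j * w i| := le_abs_self _
      _ = |w j| * |w i| := abs_mul _ _
  have := eadj_nonneg G i j
  nlinarith

lemma inner_adjMatrix_eq_Qf (G : SimpleGraph V) [inst : DecidableRel G.Adj]
    (v : EuclideanSpace ℝ V) :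
    (inner ℝ (Matrix.toEuclideanLin (G.adjMatrix ℝ) v) v : ℝ) = Qf G v := by
  rw [PiLp.inner_apply, Qf]
  refine Finset.sum_congr rfl fun i _ => ?_
  rw [Matrix.toEuclideanLin_apply]
  simp only [RCLike.inner_apply, conj_trivial,
    Matrix.mulVec, dotProduct]
  rw [Finset.mul_sum]
  refine Finset.sum_congr rfl fun j _ => ?_
  by_cases h : G.Adj i j <;> simp [h, eadj, mul_comm]

lemma norm_abs_eq (v : EuclideanSpace ℝ V) :
    ‖(WithLp.equiv 2 (V → ℝ)).symm (fun i => |v i|)‖ = ‖v‖ := by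
  rw [EuclideanSpace.norm_eq, EuclideanSpace.norm_eq]
  congr 1
  refine Finset.sum_congr rfl fun i _ => ?_
  simp [Real.norm_eq_abs, abs_abs]

lemma norm_comp_swap (w : EuclideanSpace ℝ V) :
    ‖(WithLp.equiv 2 (V → ℝ)).symm (fun i => w (Equiv.swap x y i))‖ = ‖w‖ := by
  rw [EuclideanSpace.norm_eq, EuclideanSpace.norm_eq]
  congr 1
  rw [← Equiv.sum_comp (Equiv.swap x y) (fun i => ‖w i‖ ^ 2)]
  refine Finset.sum_congr rfl fun i _ => ?_
  simp

end Quad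

end Comb

lemma adjMatrix_isHermitian {V : Type*} [DecidableEq V] [Fintype V] (G : SimpleGraph V)
    [DecidableRel G.Adj] : (G.adjMatrix ℝ).IsHermitian := by
  ext i j
  simp [Matrix.conjTranspose_apply, SimpleGraph.adjMatrix_apply, G.adj_comm j i]

/-- The Kelmans operation does not decrease the spectral radius. -/
theorem kelmans_specRad_le {V : Type*} [Fintype V] [DecidableEq V]
    (G : SimpleGraph V) (x y : V) (hxy : x ≠ y) :
    specRad G ≤ specRad (kelmans G x y) := by
  letI instG : DecidableRel G.Adj := Classical.decRel _
  letI instK : DecidableRel (kelmans G x y).Adj := Classical.decRel _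
  have hne : Nonempty V := ⟨x⟩
  have hA : (G.adjMatrix ℝ).IsHermitian := adjMatrix_isHermitian G
  have hB : ((kelmans G x y).adjMatrix ℝ).IsHermitian := adjMatrix_isHermitian _
  show sSup (spectrum ℝ (G.adjMatrix ℝ)) ≤ sSup (spectrum ℝ ((kelmans G x y).adjMatrix ℝ))
  rw [(isGreatest_rayleighSup _ hA).csSup_eq, (isGreatest_rayleighSup _ hB).csSup_eq]
  -- it suffices to bound every Rayleigh quotient of `G`
  have hNe : Nonempty { v : EuclideanSpace ℝ V // v ≠ 0 } := by
    refine ⟨⟨EuclideanSpace.single x (1:ℝ), fun h => ?_⟩⟩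
    have h1 : EuclideanSpace.single x (1:ℝ) x = 0 := by rw [h]; rfl
    simp [EuclideanSpace.single_apply] at h1
  refine ciSup_le ?_
  rintro ⟨v, hv⟩
  set W : EuclideanSpace ℝ V := (WithLp.equiv 2 (V → ℝ)).symm (fun i => |v i|) with hW
  have hWapp : ∀ i, W i = |v i| := fun i => rfl
  have hWnn : ∀ i, 0 ≤ W i := fun i => abs_nonneg _
  have hWnorm : ‖W‖ = ‖v‖ := norm_abs_eq v
  have hvpos : (0:ℝ) < ‖v‖ := norm_pos_iff.mpr hv
  have hWne : W ≠ 0 := by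
    intro h; rw [h, norm_zero] at hWnorm; exact hvpos.ne hWnorm
  have step1 : (inner ℝ (Matrix.toEuclideanLin (G.adjMatrix ℝ) v) v : ℝ) ≤ Qf G W := by
    rw [inner_adjMatrix_eq_Qf]
    exact Qf_le_abs G v
  by_cases hcase : W x ≤ W y
  · -- use `W` itself
    have step2 : Qf G W ≤ Qf (kelmans G x y) W := Qf_le_kelmans hxy W hWnn hcase
    have step3 : Qf (kelmans G x y) W
        = (inner ℝ (Matrix.toEuclideanLin ((kelmans G x y).adjMatrix ℝ) W) W : ℝ) :=
      (inner_adjMatrix_eq_Qf _ W).symm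
    have hfinal := rayleigh_le_rayleighSup ((kelmans G x y).adjMatrix ℝ) W hWne
    calc (inner ℝ (Matrix.toEuclideanLin (G.adjMatrix ℝ) v) v : ℝ) / ‖v‖ ^ 2
        ≤ (inner ℝ (Matrix.toEuclideanLin ((kelmans G x y).adjMatrix ℝ) W) W : ℝ) / ‖v‖ ^ 2 := by
          gcongr
          rw [← step3]; exact le_trans step1 step2
      _ = (inner ℝ (Matrix.toEuclideanLin ((kelmans G x y).adjMatrix ℝ) W) W : ℝ) / ‖W‖ ^ 2 := by
          rw [hWnorm]
      _ ≤ rayleighSup ((kelmans G x y).adjMatrix ℝ) := hfinal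
  · -- use the swapped vector
    push_neg at hcase
    set W' : EuclideanSpace ℝ V :=
      (WithLp.equiv 2 (V → ℝ)).symm (fun i => W (Equiv.swap x y i)) with hW'
    have hW'norm : ‖W'‖ = ‖W‖ := norm_comp_swap W
    have hW'ne : W' ≠ 0 := by
      intro h
      rw [h, norm_zero] at hW'norm
      rw [hWnorm] at hW'norm
      exact hvpos.ne' hW'norm.symm
    have step2 : Qf G W ≤ Qf (kelmans G y x) W :=
      Qf_le_kelmans hxy.symm W hWnn (le_of_lt hcase)
    have step2' : Qf (kelmans G y x) W = Qf (kelmans G x y) W' := by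
      rw [Qf_swap hxy W]
      rfl
    have step3 : Qf (kelmans G x y) W'
        = (inner ℝ (Matrix.toEuclideanLin ((kelmans G x y).adjMatrix ℝ) W') W' : ℝ) :=
      (inner_adjMatrix_eq_Qf _ W').symm
    have hfinal := rayleigh_le_rayleighSup ((kelmans G x y).adjMatrix ℝ) W' hW'ne
    calc (inner ℝ (Matrix.toEuclideanLin (G.adjMatrix ℝ) v) v : ℝ) / ‖v‖ ^ 2
        ≤ (inner ℝ (Matrix.toEuclideanLin ((kelmans G x y).adjMatrix ℝ) W') W' : ℝ) / ‖v‖ ^ 2 := by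
          gcongr
          rw [← step3, ← step2']; exact le_trans step1 step2
      _ = (inner ℝ (Matrix.toEuclideanLin ((kelmans G x y).adjMatrix ℝ) W') W' : ℝ) / ‖W'‖ ^ 2 := by
          rw [hW'norm, hWnorm]
      _ ≤ rayleighSup ((kelmans G x y).adjMatrix ℝ) := hfinal
end

section
/- Let k ≥ 2 and let n, s be integers with k−1 ≤ s ≤ ⌊n/2⌋ − 1. Then the graph K_{s+1} ∨ (sK₁ ∪ K_{n−2s−1}) has n vertices, minimum degree s+1 ≥ k, and is not Hamiltonian-connected. -/
open SimpleGraph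

/-- A graph is Hamiltonian-connected if every pair of distinct vertices is joined by a
Hamiltonian (spanning) path. -/
def SimpleGraph.IsHamiltonianConnected {V : Type*} [DecidableEq V] (G : SimpleGraph V) : Prop :=
  ∀ u v : V, u ≠ v → ∃ p : G.Walk u v, p.IsHamiltonian

open Finset

lemma hGraph_adj_iff {n a b : ℕ} (x y : Fin n) :
    (hGraph n a b).Adj x y ↔
      (x:ℕ) ≠ (y:ℕ) ∧ ((x:ℕ) < a ∨ (y:ℕ) < a ∨ (a + b ≤ (x:ℕ) ∧ a + b ≤ (y:ℕ))) := by
  constructor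
  · rintro ⟨h1, h2⟩; exact ⟨fun h => h1 (Fin.ext h), h2⟩
  · rintro ⟨h1, h2⟩; exact ⟨fun h => h1 (congrArg Fin.val h), h2⟩

lemma card_filter_val {n : ℕ} (P : ℕ → Prop) [DecidablePred P] :
    (Finset.univ.filter (fun x : Fin n => P (x:ℕ))).card = ((Finset.range n).filter P).card := by
  refine Finset.card_bij (fun x _ => (x:ℕ)) ?_ ?_ ?_
  · intro x hx
    simp only [mem_filter, mem_range, mem_univ, true_and] at hx ⊢
    exact ⟨x.isLt, hx⟩
  · intro x _ y _ h; exact Fin.ext h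
  · intro m hm
    simp only [mem_filter, mem_range] at hm
    exact ⟨⟨m, hm.1⟩, by simp [hm.2], rfl⟩

lemma key {n s : ℕ} (hs1 : 1 ≤ s) (hn : 2*s+2 ≤ n)
    (σ : ℕ → Fin n)
    (hinj : ∀ i j, i < n → j < n → σ i = σ j → i = j)
    (hsurj : ∀ x : Fin n, ∃ i, i < n ∧ σ i = x)
    (h0 : (σ 0 : ℕ) = 0)
    (hlast : (σ (n-1) : ℕ) = 1)
    (hadj : ∀ i, i + 1 < n → (hGraph n (s+1) s).Adj (σ i) (σ (i+1))) : False := by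
  classical
  have hadj' : ∀ i, i + 1 < n →
      ((σ i:ℕ) < s+1 ∨ (σ (i+1):ℕ) < s+1 ∨ (2*s+1 ≤ (σ i:ℕ) ∧ 2*s+1 ≤ (σ (i+1):ℕ))) := by
    intro i h
    have := (hGraph_adj_iff (σ i) (σ (i+1))).mp (hadj i h)
    omega
  have hcard : ∀ (P : Fin n → Prop) [DecidablePred P],
      ((Finset.range n).filter (fun i => P (σ i))).card = (Finset.univ.filter P).card := by
    intro P _
    refine Finset.card_bij (fun i _ => σ i) ?_ ?_ ?_
    · intro i hi; simp only [mem_filter, mem_range, mem_univ, true_and] at hi ⊢; exact hi.2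
    · intro i hi j hj h
      simp only [mem_filter, mem_range] at hi hj
      exact hinj i j hi.1 hj.1 h
    · intro x hx
      simp only [mem_filter, mem_univ, true_and] at hx
      obtain ⟨i, hi, rfl⟩ := hsurj x
      exact ⟨i, by simp [mem_filter, mem_range, hi, hx], rfl⟩
  set Qs := (Finset.range n).filter (fun i => (σ i:ℕ) < s+1) with hQs
  set Ps := (Finset.range n).filter (fun i => s+1 ≤ (σ i:ℕ) ∧ (σ i:ℕ) < 2*s+1) with hPs
  have hQ : Qs.card = s + 1 := by
    rw [hQs, hcard (fun x : Fin n => (x:ℕ) < s+1), card_filter_val (fun m => m < s+1)]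
    have : (Finset.range n).filter (fun m => m < s+1) = Finset.range (s+1) := by
      ext m; simp only [mem_filter, mem_range]; omega
    rw [this, Finset.card_range]
  have hP : Ps.card = s := by
    rw [hPs, hcard (fun x : Fin n => s+1 ≤ (x:ℕ) ∧ (x:ℕ) < 2*s+1),
      card_filter_val (fun m => s+1 ≤ m ∧ m < 2*s+1)]
    have : (Finset.range n).filter (fun m => s+1 ≤ m ∧ m < 2*s+1) = Finset.Ico (s+1) (2*s+1) := by
      ext m; simp only [mem_filter, mem_range, Finset.mem_Ico]; omega
    rw [this, Nat.card_Ico]; omega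
  set B := (Finset.range (n-1)).filter
    (fun i => ((σ i:ℕ) < s+1 ∧ ¬ (σ (i+1):ℕ) < s+1) ∨ (¬ (σ i:ℕ) < s+1 ∧ (σ (i+1):ℕ) < s+1))
    with hBdef
  have hmemB : ∀ i, i ∈ B ↔ i < n - 1 ∧
      (((σ i:ℕ) < s+1 ∧ ¬ (σ (i+1):ℕ) < s+1) ∨ (¬ (σ i:ℕ) < s+1 ∧ (σ (i+1):ℕ) < s+1)) := by
    intro i; rw [hBdef]; simp [mem_filter, mem_range]
  -- upper bound
  have hupper : B.card ≤ 2*s := by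
    set T := (((Qs ×ˢ (Finset.univ : Finset Bool)).erase (0, false)).erase (n-1, true)) with hT
    have h0Q : (0:ℕ) ∈ Qs := by
      rw [hQs]; simp only [mem_filter, mem_range]; omega
    have hlQ : n-1 ∈ Qs := by
      rw [hQs]; simp only [mem_filter, mem_range]; omega
    have hTcard : T.card = 2*s := by
      rw [hT, Finset.card_erase_of_mem, Finset.card_erase_of_mem]
      · rw [Finset.card_product, hQ]
        simp only [Finset.card_univ, Fintype.card_bool]
        omega
      · exact Finset.mem_product.mpr ⟨h0Q, Finset.mem_univ _⟩
      · refine Finset.mem_erase.mpr ⟨?_, Finset.mem_product.mpr ⟨hlQ, Finset.mem_univ _⟩⟩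
        simp
    rw [← hTcard]
    refine Finset.card_le_card_of_injOn
      (fun i => if (σ i:ℕ) < s+1 then ((i, true) : ℕ × Bool) else (i+1, false)) ?_ ?_
    · intro i hi
      rw [Finset.mem_coe, hmemB] at hi
      obtain ⟨hilt, hbd⟩ := hi
      by_cases h : (σ i:ℕ) < s+1
      · have h2 : ¬ (σ (i+1):ℕ) < s+1 := by tauto
        simp only [if_pos h]
        rw [hT]
        refine Finset.mem_erase.mpr ⟨by simp; omega, Finset.mem_erase.mpr ⟨by simp,
          Finset.mem_product.mpr ⟨?_, Finset.mem_univ _⟩⟩⟩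
        rw [hQs]; simp only [mem_filter, mem_range]; exact ⟨by omega, h⟩
      · have h2 : (σ (i+1):ℕ) < s+1 := by tauto
        simp only [if_neg h]
        rw [hT]
        refine Finset.mem_erase.mpr ⟨by simp, Finset.mem_erase.mpr ⟨by simp,
          Finset.mem_product.mpr ⟨?_, Finset.mem_univ _⟩⟩⟩
        rw [hQs]; simp only [mem_filter, mem_range]; exact ⟨by omega, h2⟩
    · intro i hi j hj hfeq
      dsimp only at hfeq
      by_cases h1 : (σ i:ℕ) < s+1 <;> by_cases h2 : (σ j:ℕ) < s+1
      · rw [if_pos h1, if_pos h2] at hfeq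
        exact congrArg Prod.fst hfeq
      · rw [if_pos h1, if_neg h2] at hfeq
        exact absurd (congrArg Prod.snd hfeq) (by simp)
      · rw [if_neg h1, if_pos h2] at hfeq
        exact absurd (congrArg Prod.snd hfeq) (by simp)
      · rw [if_neg h1, if_neg h2] at hfeq
        have := congrArg Prod.fst hfeq
        simp only at this
        omega
  -- lower bound
  have hex : ∃ i, i < n ∧ 2*s+1 ≤ (σ i : ℕ) := by
    obtain ⟨i, hi, hx⟩ := hsurj ⟨2*s+1, by omega⟩
    exact ⟨i, hi, by rw [hx]⟩
  set j := Nat.find hex with hj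
  obtain ⟨hjn, hjC⟩ : j < n ∧ 2*s+1 ≤ (σ j : ℕ) := Nat.find_spec hex
  have hj1 : 1 ≤ j := by
    rcases Nat.eq_zero_or_pos j with h | h
    · rw [h] at hjC; omega
    · exact h
  have hjpred : (σ (j-1) : ℕ) < 2*s+1 := by
    have := Nat.find_min hex (m := j-1) (by omega)
    push_neg at this
    exact this (by omega)
  -- facts about Ps members
  have hPsfact : ∀ i ∈ Ps, 1 ≤ i ∧ i + 1 < n ∧ s+1 ≤ (σ i:ℕ) ∧ (σ i:ℕ) < 2*s+1 := by
    intro i hi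
    rw [hPs] at hi
    simp only [mem_filter, mem_range] at hi
    obtain ⟨hin, hlo, hhi⟩ := hi
    have hne0 : i ≠ 0 := by rintro rfl; omega
    have hnel : i ≠ n - 1 := by rintro rfl; omega
    exact ⟨by omega, by omega, hlo, hhi⟩
  set g : ℕ × Bool → ℕ := fun p => if p.2 = true then p.1 else p.1 - 1 with hg
  have hgf : ∀ m : ℕ, g (m, false) = m - 1 := fun _ => rfl
  have hgt : ∀ m : ℕ, g (m, true) = m := fun _ => rfl
  have himgsub : ∀ q ∈ (Ps ×ˢ (Finset.univ : Finset Bool)), g q ∈ B := by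
    rintro ⟨i, b⟩ hq
    have hiP : i ∈ Ps := (Finset.mem_product.mp hq).1
    obtain ⟨hi1, hin, hlo, hhi⟩ := hPsfact i hiP
    cases b
    · rw [hgf]
      have heq : i - 1 + 1 = i := by omega
      have hA := hadj' (i-1) (by omega)
      rw [heq] at hA
      rw [hmemB, heq]
      exact ⟨by omega, Or.inl ⟨by omega, by omega⟩⟩
    · rw [hgt]
      have hA := hadj' i hin
      rw [hmemB]
      exact ⟨by omega, Or.inr ⟨by omega, by omega⟩⟩
  have hjB : j - 1 ∈ B := by
    have heq : j - 1 + 1 = j := by omega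
    have hA := hadj' (j-1) (by omega)
    rw [heq] at hA
    rw [hmemB, heq]
    exact ⟨by omega, Or.inl ⟨by omega, by omega⟩⟩
  have hginj : Set.InjOn g ((Ps ×ˢ (Finset.univ : Finset Bool) : Finset (ℕ × Bool)) :
      Set (ℕ × Bool)) := by
    rintro ⟨i, b⟩ hq ⟨i', b'⟩ hq' heq
    rw [Finset.mem_coe] at hq hq'
    obtain ⟨hi1, hin, hlo, hhi⟩ := hPsfact i (Finset.mem_product.mp hq).1
    obtain ⟨hi1', hin', hlo', hhi'⟩ := hPsfact i' (Finset.mem_product.mp hq').1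
    cases b <;> cases b' <;> simp only [hgf, hgt] at heq
    · obtain rfl : i = i' := by omega
      rfl
    · exfalso
      have h2 : i' + 1 = i := by omega
      have hA := hadj' i' hin'
      rw [h2] at hA
      omega
    · exfalso
      have h2 : i + 1 = i' := by omega
      have hA := hadj' i hin
      rw [h2] at hA
      omega
    · obtain rfl : i = i' := heq
      rfl
  have hjnotimg : j - 1 ∉ (Ps ×ˢ (Finset.univ : Finset Bool)).image g := by
    intro hmem
    obtain ⟨⟨i, b⟩, hq, heq⟩ := Finset.mem_image.mp hmem
    have hiP : i ∈ Ps := (Finset.mem_product.mp hq).1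
    obtain ⟨hi1, hin, hlo, hhi⟩ := hPsfact i hiP
    cases b <;> simp only [hgf, hgt] at heq
    · have hij : i = j := by omega
      rw [hij] at hhi
      omega
    · have hje : j - 1 + 1 = j := by omega
      have hA := hadj' (j-1) (by omega)
      rw [hje] at hA
      rw [heq] at hlo hhi
      omega
  have hlower : 2*s + 1 ≤ B.card := by
    have hsub : insert (j-1) ((Ps ×ˢ (Finset.univ : Finset Bool)).image g) ⊆ B := by
      intro x hx
      rcases Finset.mem_insert.mp hx with rfl | hx
      · exact hjB
      · obtain ⟨q, hq, rfl⟩ := Finset.mem_image.mp hx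
        exact himgsub q hq
    calc 2*s + 1 = (insert (j-1) ((Ps ×ˢ (Finset.univ : Finset Bool)).image g)).card := by
          rw [Finset.card_insert_of_notMem hjnotimg,
            Finset.card_image_of_injOn hginj, Finset.card_product, hP]
          simp only [Finset.card_univ, Fintype.card_bool]
          omega
      _ ≤ B.card := Finset.card_le_card hsub
  omega

/-- For `k ≥ 2` and `k-1 ≤ s ≤ ⌊n/2⌋ - 1`, the graph `K_{s+1} ∨ (sK₁ ∪ K_{n-2s-1})` has
`n` vertices, minimum degree `s + 1 ≥ k`, and is not Hamiltonian-connected. -/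
theorem hGraph_not_hamiltonianConnected {n k s : ℕ} (hk : 2 ≤ k) (hks : k - 1 ≤ s)
    (hs : s ≤ n / 2 - 1) :
    Fintype.card (Fin n) = n ∧ (hGraph n (s + 1) s).minDegree = s + 1 ∧ k ≤ s + 1 ∧
      ¬ (hGraph n (s + 1) s).IsHamiltonianConnected := by
  have hs1 : 1 ≤ s := by omega
  have hn : 2*s + 2 ≤ n := by omega
  have hn4 : 4 ≤ n := by omega
  refine ⟨Fintype.card_fin n, ?_, by omega, ?_⟩
  · -- minimum degree
    haveI : Nonempty (Fin n) := ⟨⟨0, by omega⟩⟩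
    apply le_antisymm
    · set w : Fin n := ⟨s+1, by omega⟩ with hwdef
      have hwval : (w:ℕ) = s+1 := rfl
      refine le_trans (SimpleGraph.minDegree_le_degree _ w) (le_of_eq ?_)
      show ((hGraph n (s+1) s).neighborFinset w).card = s + 1
      have hnb : (hGraph n (s+1) s).neighborFinset w
          = Finset.univ.filter (fun x : Fin n => (x:ℕ) < s+1) := by
        ext y
        rw [SimpleGraph.mem_neighborFinset, hGraph_adj_iff]
        simp only [Finset.mem_filter, Finset.mem_univ, true_and]
        omega
      rw [hnb, card_filter_val (fun m => m < s+1)]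
      have : (Finset.range n).filter (fun m => m < s+1) = Finset.range (s+1) := by
        ext m; simp only [Finset.mem_filter, Finset.mem_range]; omega
      rw [this, Finset.card_range]
    · apply SimpleGraph.le_minDegree_of_forall_le_degree
      intro v
      show s + 1 ≤ ((hGraph n (s+1) s).neighborFinset v).card
      by_cases hv : (v:ℕ) < s+1
      · have hsub : Finset.univ.filter (fun x : Fin n => s+1 ≤ (x:ℕ) ∧ (x:ℕ) < 2*s+2)
            ⊆ (hGraph n (s+1) s).neighborFinset v := by
          intro y hy
          simp only [Finset.mem_filter, Finset.mem_univ, true_and] at hy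
          rw [SimpleGraph.mem_neighborFinset, hGraph_adj_iff]
          omega
        refine le_trans (le_of_eq ?_) (Finset.card_le_card hsub)
        rw [card_filter_val (fun m => s+1 ≤ m ∧ m < 2*s+2)]
        have : (Finset.range n).filter (fun m => s+1 ≤ m ∧ m < 2*s+2)
            = Finset.Ico (s+1) (2*s+2) := by
          ext m; simp only [Finset.mem_filter, Finset.mem_range, Finset.mem_Ico]; omega
        rw [this, Nat.card_Ico]; omega
      · have hsub : Finset.univ.filter (fun x : Fin n => (x:ℕ) < s+1)
            ⊆ (hGraph n (s+1) s).neighborFinset v := by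
          intro y hy
          simp only [Finset.mem_filter, Finset.mem_univ, true_and] at hy
          rw [SimpleGraph.mem_neighborFinset, hGraph_adj_iff]
          omega
        refine le_trans (le_of_eq ?_) (Finset.card_le_card hsub)
        rw [card_filter_val (fun m => m < s+1)]
        have : (Finset.range n).filter (fun m => m < s+1) = Finset.range (s+1) := by
          ext m; simp only [Finset.mem_filter, Finset.mem_range]; omega
        rw [this, Finset.card_range]
  · -- not Hamiltonian-connected
    intro hc
    have hne : (⟨0, by omega⟩ : Fin n) ≠ ⟨1, by omega⟩ := by
      intro h
      have := congrArg Fin.val h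
      simp at this
    obtain ⟨p, hp⟩ := hc ⟨0, by omega⟩ ⟨1, by omega⟩ hne
    set l := p.support with hl
    have hlen : l.length = n := by
      rw [hl, SimpleGraph.Walk.length_support, hp.length_eq, Fintype.card_fin]
      omega
    have hnd : l.Nodup := hp.isPath.support_nodup
    set σ : ℕ → Fin n := fun i => l.getD i ⟨0, by omega⟩ with hσ
    have hget : ∀ i, (h : i < n) → σ i = l[i]'(by rw [hlen]; exact h) := by
      intro i h
      rw [hσ]
      exact List.getD_eq_getElem l _ (by rw [hlen]; exact h)
    have hinj : ∀ i j, i < n → j < n → σ i = σ j → i = j := by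
      intro i j hi hj hij
      rw [hget i hi, hget j hj] at hij
      exact (List.Nodup.getElem_inj_iff hnd).mp hij
    have hsurj : ∀ x : Fin n, ∃ i, i < n ∧ σ i = x := by
      intro x
      have hx : x ∈ l := hp.mem_support x
      obtain ⟨i, hi, hix⟩ := List.mem_iff_getElem.mp hx
      refine ⟨i, by rw [← hlen]; exact hi, ?_⟩
      rw [hget i (by rw [← hlen]; exact hi)]
      exact hix
    have h0 : (σ 0 : ℕ) = 0 := by
      have hh : l.head p.support_ne_nil = ⟨0, by omega⟩ := p.head_support
      have h2 : l.head p.support_ne_nil = l[0]'(by rw [hlen]; omega) :=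
        List.head_eq_getElem_zero _
      rw [hget 0 (by omega), ← h2, hh]
    have hlast : (σ (n-1) : ℕ) = 1 := by
      have h1 := SimpleGraph.Walk.getLast_support p
      rw [List.getLast_eq_getElem] at h1
      rw [hget (n-1) (by omega)]
      have : l.length - 1 = n - 1 := by omega
      simp only [← hl, this] at h1
      rw [h1]
    have hchain := SimpleGraph.Walk.isChain_adj_support p
    rw [← hl, List.isChain_iff_getElem] at hchain
    have hadj : ∀ i, i + 1 < n → (hGraph n (s+1) s).Adj (σ i) (σ (i+1)) := by
      intro i h
      have := hchain i (by omega)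
      rw [hget i (by omega), hget (i+1) h]
      simpa using this
    exact key hs1 hn σ hinj hsurj h0 hlast hadj
end

section
/- Fix integers n and k ≥ 2, and define f(s) = s·C(s−1, k−1) + C(n−s, k) for 1 ≤ s ≤ ⌊(n−1)/2⌋. Then f is a convex function of s; consequently, max over d ≤ s ≤ ⌊(n−1)/2⌋ of f(s) is attained at s = d or s = ⌊(n−1)/2⌋. -/
/-!
Since `s·C(s-1, k-1) = k·C(s, k)`, Pascal's rule gives
`f(s+1) - f(s) = k·C(s, k-1) - C(n-s-1, k-1)`, which is nondecreasing in `s`.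
A function with nondecreasing differences on an integer interval is nonincreasing up to its
first nonnegative difference and nondecreasing from there on, so it is bounded by the larger
of its values at the endpoints.
-/

/-- `f s = s·C(s-1, k-1) + C(n-s, k)`, the number of `k`-cliques of
`K_s ∨ (sK₁ ∪ K_{n-2s})`, as an integer. -/
def cliqueCount (n k s : ℕ) : ℤ :=
  (s : ℤ) * (s - 1).choose (k - 1) + (n - s).choose k

lemma le_max_of_monotoneOn_sub {α : Type*}
    [AddCommGroup α] [LinearOrder α] [IsOrderedAddMonoid α] {f : ℕ → α} {a b : ℕ}
    (hf : MonotoneOn (fun t ↦ f (t + 1) - f t) (Set.Ico a b))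
    {s : ℕ} (has : a ≤ s) (hsb : s ≤ b) : f s ≤ max (f a) (f b) := by
  rcases hsb.eq_or_lt with rfl | hsb
  · exact le_max_right _ _
  by_cases hslope : 0 ≤ f (s + 1) - f s
  · have hmono : MonotoneOn f (Set.Icc s b) := by
      refine monotoneOn_of_le_add_one Set.ordConnected_Icc fun t _ ht ht' ↦ ?_
      have : f (s + 1) - f s ≤ f (t + 1) - f t :=
        hf ⟨has, hsb⟩ ⟨has.trans ht.1, by simpa using ht'.2⟩ ht.1
      exact sub_nonneg.mp (hslope.trans this)
    exact (hmono ⟨le_rfl, hsb.le⟩ ⟨hsb.le, le_rfl⟩ hsb.le).trans (le_max_right _ _)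
  · have hanti : AntitoneOn f (Set.Icc a s) := by
      refine antitoneOn_of_add_one_le Set.ordConnected_Icc fun t _ ht ht' ↦ ?_
      have : f (t + 1) - f t ≤ f (s + 1) - f s :=
        hf ⟨ht.1, by have := ht'.2; omega⟩ ⟨has, hsb⟩ (by have := ht'.2; omega)
      exact sub_nonpos.mp (this.trans (not_le.mp hslope).le)
    exact (hanti ⟨le_rfl, has⟩ ⟨has, le_rfl⟩ has).trans (le_max_left _ _)

lemma cliqueCount_succ_eq (n k s : ℕ) :
    cliqueCount n (k + 1) s = (k + 1) * s.choose (k + 1) + (n - s).choose (k + 1) := by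
  cases s with
  | zero => simp [cliqueCount]
  | succ r =>
    have h : ((r + 1) * r.choose k : ℤ) = (r + 1).choose (k + 1) * (k + 1) := by
      exact_mod_cast Nat.add_one_mul_choose_eq r k
    simp only [cliqueCount, Nat.add_sub_cancel]
    push_cast
    linear_combination h

lemma cliqueCount_succ_sub (k : ℕ) {n s : ℕ} (hs : s < n) :
    cliqueCount n (k + 1) (s + 1) - cliqueCount n (k + 1) s =
      (k + 1) * s.choose k - (n - s - 1).choose k := by
  obtain ⟨m, rfl⟩ : ∃ m, n = s + 1 + m := ⟨n - s - 1, by omega⟩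
  simp only [cliqueCount_succ_eq, Nat.choose_succ_succ, show s + 1 + m - (s + 1) = m by omega,
    show s + 1 + m - s = m + 1 by omega]
  push_cast
  ring

lemma cliqueCount_succ_sub_monotoneOn (n k : ℕ) :
    MonotoneOn (fun s ↦ cliqueCount n (k + 1) (s + 1) - cliqueCount n (k + 1) s) (Set.Iio n) := by
  intro s hs t ht hst
  simp only [cliqueCount_succ_sub k hs, cliqueCount_succ_sub k ht]
  gcongr

/-- For fixed `n` and `k ≥ 2`, the function `f(s) = s·C(s-1,k-1) + C(n-s,k)` is convex on
`1 ≤ s ≤ ⌊(n-1)/2⌋` (its successive differences are nondecreasing); consequently its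
maximum over any interval `d ≤ s ≤ ⌊(n-1)/2⌋` is attained at an endpoint. -/
theorem cliqueCount_convex {n k : ℕ} (hk : 2 ≤ k) :
    (∀ s t : ℕ, 1 ≤ s → s ≤ t → t + 1 ≤ (n - 1) / 2 →
      cliqueCount n k (s + 1) - cliqueCount n k s ≤
        cliqueCount n k (t + 1) - cliqueCount n k t) ∧
    (∀ d s : ℕ, 1 ≤ d → d ≤ s → s ≤ (n - 1) / 2 →
      cliqueCount n k s ≤ max (cliqueCount n k d) (cliqueCount n k ((n - 1) / 2))) := by
  obtain ⟨k, rfl⟩ : ∃ j, k = j + 1 := ⟨k - 1, by omega⟩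
  have hconv (d : ℕ) :
      MonotoneOn (fun s ↦ cliqueCount n (k + 1) (s + 1) - cliqueCount n (k + 1) s)
        (Set.Ico d ((n - 1) / 2)) :=
    (cliqueCount_succ_sub_monotoneOn n k).mono fun t ht ↦ by
      simp only [Set.mem_Ico, Set.mem_Iio] at ht ⊢; omega
  refine ⟨fun s t hs hst ht ↦ hconv 1 ⟨hs, by omega⟩ ⟨by omega, by omega⟩ hst,
    fun d s _ hds hs ↦ le_max_of_monotoneOn_sub (hconv d) hds hs⟩
end
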